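/- arXiv:2511.20915 — 5 statements merged into one kernel-verified Lean document; each statement's English description precedes it below -/
import Mathlib

section
/- Let G be a finite group acting on finite sets S and Λ, let P : S → Λ be a G-equivariant map (P(g·s) = g·P(s)), let p_1, …, p_t be distinct elements of Λ, let π_i = P⁻¹({p_i}) ⊆ S, and let K_i = Stab_G(p_i). Assume: (2) every s ∈ S lies in the same G-orbit as some element of π_1 ∪ … ∪ π_t; and (3) whenever two elements s, s′ ∈ π_1 ∪ … ∪ π_t lie in the same G-orbit, P(s) = P(s′). Let T ⊆ S be a G-invariant subset (g·s ∈ T whenever s ∈ T and g ∈ G). Then |T| = Σ_{i=1}^{t} |π_i ∩ T| · [G : K_i]. -/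
/-!
By (2) and (3), every `s` has `P s` in the orbit of exactly one `p i`, so `T` splits into the parts
`{s ∈ T | P s ∈ G • p i}`. On such a part `P` takes values in the orbit of `p i`, which has
`[G : K i]` points, and translation by `g` maps the fibre of `T` over `p i` bijectively onto the
fibre over `g • p i` because `P` is equivariant and `T` is invariant.
-/

open MulAction Finset

theorem Finset.card_eq_sum_card_filter_of_existsUnique {α ι : Type*} [Fintype ι]
    (T : Finset α) (q : ι → α → Prop) [∀ i, DecidablePred (q i)]
    (h : ∀ a ∈ T, ∃! i, q i a) : #T = ∑ i, #{a ∈ T | q i a} :=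
  calc #T = ∑ a ∈ T, #{i | q i a} := by
        rw [card_eq_sum_ones]
        exact sum_congr rfl fun a ha => ((Fintype.existsUnique_iff_card_one _).mp (h a ha)).symm
    _ = ∑ i, #{a ∈ T | q i a} := by
        simp only [card_filter]
        exact sum_comm

section
variable {G S Λ : Type*} [Group G] [MulAction G S] [MulAction G Λ]
  {P : S → Λ} (hP : ∀ (g : G) (s : S), P (g • s) = g • P s)
include hP

theorem existsUnique_mem_orbit {ι : Type*} {p : ι → Λ} (hp : Function.Injective p)
    (h2 : ∀ s : S, ∃ (i : ι) (s' : S), P s' = p i ∧ ∃ g : G, g • s' = s)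
    (h3 : ∀ s s' : S, (∃ i : ι, P s = p i) → (∃ j : ι, P s' = p j) →
      (∃ g : G, g • s = s') → P s = P s') (s : S) :
    ∃! i, P s ∈ orbit G (p i) := by
  obtain ⟨i, s', hs', g, rfl⟩ := h2 s
  refine ⟨i, ⟨g, by rw [hP, hs']⟩, fun j ⟨k, hk⟩ => hp ?_⟩
  have hkj : P (k⁻¹ • g • s') = p j := by rw [hP, ← hk, inv_smul_smul]
  rw [← hkj, ← hs']
  exact h3 _ _ ⟨j, hkj⟩ ⟨i, hs'⟩ ⟨g⁻¹ * k, by simp [smul_smul]⟩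

variable [DecidableEq Λ] {T : Finset S} (hT : ∀ s ∈ T, ∀ g : G, g • s ∈ T)
include hT

theorem card_filter_eq_smul (g : G) (a : Λ) :
    #{s ∈ T | P s = g • a} = #{s ∈ T | P s = a} := by
  refine card_nbij' (g⁻¹ • ·) (g • ·) ?_ ?_ ?_ ?_ <;> intro s hs <;>
    simp only [coe_filter, Set.mem_ofPred_eq] at hs ⊢
  · exact ⟨hT s hs.1 _, by rw [hP, hs.2, inv_smul_smul]⟩
  · exact ⟨hT s hs.1 _, by rw [hP, hs.2]⟩
  · exact smul_inv_smul g s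
  · exact inv_smul_smul g s

open Classical in
theorem card_filter_mem_orbit [Fintype G] (a : Λ) :
    #{s ∈ T | P s ∈ orbit G a} = #{s ∈ T | P s = a} * (stabilizer G a).index := by
  have hfin : (orbit G a).Finite := Set.finite_range _
  rw [index_stabilizer, Set.ncard_eq_toFinset_card _ hfin, mul_comm,
    card_eq_sum_card_fiberwise (f := P) (t := hfin.toFinset)
      fun s hs => hfin.mem_toFinset.mpr (mem_filter.mp hs).2, ← smul_eq_mul, ← sum_const]
  refine sum_congr rfl fun b hb => ?_
  obtain ⟨g, rfl⟩ := hfin.mem_toFinset.mp hb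
  rw [filter_filter, ← card_filter_eq_smul hP hT g a]
  congr 1
  exact filter_congr fun s _ => and_iff_right_of_imp fun h => h ▸ mem_orbit a g

end

theorem stmt_1_general {G S Λ : Type*} [Group G] [Fintype G] [Fintype S]
    [DecidableEq S] [DecidableEq Λ] [MulAction G S] [MulAction G Λ]
    (P : S → Λ) (hP : ∀ (g : G) (s : S), P (g • s) = g • P s)
    (t : ℕ) (p : Fin t → Λ) (hp : Function.Injective p)
    -- (2) every s ∈ S lies in the same G-orbit as some element of π_1 ∪ … ∪ π_t
    (h2 : ∀ s : S, ∃ (i : Fin t) (s' : S), P s' = p i ∧ ∃ g : G, g • s' = s)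
    -- (3) equivalent elements of π_1 ∪ … ∪ π_t have the same image under P
    (h3 : ∀ s s' : S, (∃ i : Fin t, P s = p i) → (∃ j : Fin t, P s' = p j) →
      (∃ g : G, g • s = s') → P s = P s')
    (T : Finset S) (hT : ∀ s ∈ T, ∀ g : G, g • s ∈ T) :
    T.card =
      ∑ i : Fin t, ((Finset.univ.filter (fun s : S => P s = p i)) ∩ T).card *
        (MulAction.stabilizer G (p i)).index := by
  classical
  rw [card_eq_sum_card_filter_of_existsUnique T (fun i s => P s ∈ orbit G (p i))
    fun s _ => existsUnique_mem_orbit hP hp h2 h3 s]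
  refine sum_congr rfl fun i _ => ?_
  rw [card_filter_mem_orbit hP hT, filter_inter, univ_inter]

/-- Counting a `G`-invariant subset `T ⊆ S` (e.g. the solvable
boards): `|T| = Σ_i |π i ∩ T| · [G : K i]`. -/
theorem stmt_1 {G S Λ : Type*} [Group G] [Fintype G] [Fintype S] [Fintype Λ]
    [DecidableEq S] [DecidableEq Λ] [MulAction G S] [MulAction G Λ]
    (P : S → Λ) (hP : ∀ (g : G) (s : S), P (g • s) = g • P s)
    (t : ℕ) (p : Fin t → Λ) (hp : Function.Injective p)
    -- (2) every s ∈ S lies in the same G-orbit as some element of π_1 ∪ … ∪ π_t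
    (h2 : ∀ s : S, ∃ (i : Fin t) (s' : S), P s' = p i ∧ ∃ g : G, g • s' = s)
    -- (3) equivalent elements of π_1 ∪ … ∪ π_t have the same image under P
    (h3 : ∀ s s' : S, (∃ i : Fin t, P s = p i) → (∃ j : Fin t, P s' = p j) →
      (∃ g : G, g • s = s') → P s = P s')
    (T : Finset S) (hT : ∀ s ∈ T, ∀ g : G, g • s ∈ T) :
    T.card =
      ∑ i : Fin t, ((Finset.univ.filter (fun s : S => P s = p i)) ∩ T).card *
        (MulAction.stabilizer G (p i)).index :=
  stmt_1_general P hP t p hp h2 h3 T hT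
end

section
/- Let k ≥ 1, n = 2k, and 1 ≤ r ≤ 4k². Call a board B with r blockers reduced if its board partition (λ1,λ2,λ3,λ4) = (λ1(B),λ2(B),λ3(B),λ4(B)) satisfies: (i) λ1 ≥ λ2, λ1 ≥ λ3, and λ1 ≥ λ4; (ii) λ2 ≥ λ4; (iii) if λ1 = λ2 then λ3 ≥ λ4. Then: (a) every board with r blockers on the n×n grid is equivalent under D4 to some reduced board; and (b) if two reduced boards are equivalent under D4 then they have the same board partition. -/
/-- The dihedral group `D4` acting on an `n × n` grid, as the eight permutations
`R0, R90, R180, R270, H, V, D, D′` of `Fin n × Fin n` (`Fin.rev i = n-1-i`). -/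
def D4 (n : ℕ) : Set ((Fin n × Fin n) → (Fin n × Fin n)) :=
  { fun p => p,                       -- R0
    fun p => (p.2.rev, p.1),          -- R90
    fun p => (p.1.rev, p.2.rev),      -- R180
    fun p => (p.2, p.1.rev),          -- R270
    fun p => (p.1.rev, p.2),          -- H
    fun p => (p.1, p.2.rev),          -- V
    fun p => (p.2, p.1),              -- D
    fun p => (p.2.rev, p.1.rev) }     -- D′

/-- Number of blockers in the top-left quadrant `Q1`. -/
def lam1 (k : ℕ) (B : Finset (Fin (2*k) × Fin (2*k))) : ℕ :=
  (B.filter (fun p => p.1.val < k ∧ p.2.val < k)).card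

/-- Number of blockers in the top-right quadrant `Q2`. -/
def lam2 (k : ℕ) (B : Finset (Fin (2*k) × Fin (2*k))) : ℕ :=
  (B.filter (fun p => p.1.val < k ∧ k ≤ p.2.val)).card

/-- Number of blockers in the bottom-right quadrant `Q3`. -/
def lam3 (k : ℕ) (B : Finset (Fin (2*k) × Fin (2*k))) : ℕ :=
  (B.filter (fun p => k ≤ p.1.val ∧ k ≤ p.2.val)).card

/-- Number of blockers in the bottom-left quadrant `Q4`. -/
def lam4 (k : ℕ) (B : Finset (Fin (2*k) × Fin (2*k))) : ℕ :=
  (B.filter (fun p => k ≤ p.1.val ∧ p.2.val < k)).card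

/-- A board is *reduced* if its board partition `(λ1,λ2,λ3,λ4)` satisfies
(i) `λ1 ≥ λ2, λ1 ≥ λ3, λ1 ≥ λ4`; (ii) `λ2 ≥ λ4`; (iii) if `λ1 = λ2` then `λ3 ≥ λ4`. -/
def Reduced (k : ℕ) (B : Finset (Fin (2*k) × Fin (2*k))) : Prop :=
  lam1 k B ≥ lam2 k B ∧ lam1 k B ≥ lam3 k B ∧ lam1 k B ≥ lam4 k B ∧
  lam2 k B ≥ lam4 k B ∧ (lam1 k B = lam2 k B → lam3 k B ≥ lam4 k B)

private lemma card_filter_image' {α β : Type*} [DecidableEq β] {g : α → β}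
    (hg : Function.Injective g) (B : Finset α) (P : β → Prop) [DecidablePred P]
    (Q : α → Prop) [DecidablePred Q] (h : ∀ p, P (g p) ↔ Q p) :
    ((B.image g).filter P).card = (B.filter Q).card := by
  rw [Finset.filter_image, Finset.card_image_of_injective _ hg]
  congr 1
  exact Finset.filter_congr fun p _ => by simp [h p]

private def RT (a b c d : ℕ) : Prop :=
  a ≥ b ∧ a ≥ c ∧ a ≥ d ∧ b ≥ d ∧ (a = b → c ≥ d)

private lemma exists_red (a b c d : ℕ) :
    RT a b c d ∨ RT b c d a ∨ RT c d a b ∨ RT d a b c ∨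
    RT a d c b ∨ RT b a d c ∨ RT c b a d ∨ RT d c b a := by
  unfold RT; omega

private lemma reduced_iff (k : ℕ) (B : Finset (Fin (2*k) × Fin (2*k))) :
    Reduced k B ↔ RT (lam1 k B) (lam2 k B) (lam3 k B) (lam4 k B) := Iff.rfl

private lemma injR0 (n : ℕ) : Function.Injective (fun p : Fin n × Fin n => p) := by
  intro p q h; exact h

private lemma injR90 (n : ℕ) :
    Function.Injective (fun p : Fin n × Fin n => (p.2.rev, p.1)) := by
  intro p q h; obtain ⟨a, b⟩ := p; obtain ⟨c, d⟩ := q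
  simp only [Prod.mk.injEq, Fin.rev_inj] at h ⊢; tauto

private lemma injR180 (n : ℕ) :
    Function.Injective (fun p : Fin n × Fin n => (p.1.rev, p.2.rev)) := by
  intro p q h; obtain ⟨a, b⟩ := p; obtain ⟨c, d⟩ := q
  simp only [Prod.mk.injEq, Fin.rev_inj] at h ⊢; tauto

private lemma injR270 (n : ℕ) :
    Function.Injective (fun p : Fin n × Fin n => (p.2, p.1.rev)) := by
  intro p q h; obtain ⟨a, b⟩ := p; obtain ⟨c, d⟩ := q
  simp only [Prod.mk.injEq, Fin.rev_inj] at h ⊢; tauto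

private lemma injH (n : ℕ) :
    Function.Injective (fun p : Fin n × Fin n => (p.1.rev, p.2)) := by
  intro p q h; obtain ⟨a, b⟩ := p; obtain ⟨c, d⟩ := q
  simp only [Prod.mk.injEq, Fin.rev_inj] at h ⊢; tauto

private lemma injV (n : ℕ) :
    Function.Injective (fun p : Fin n × Fin n => (p.1, p.2.rev)) := by
  intro p q h; obtain ⟨a, b⟩ := p; obtain ⟨c, d⟩ := q
  simp only [Prod.mk.injEq, Fin.rev_inj] at h ⊢; tauto

private lemma injD (n : ℕ) :
    Function.Injective (fun p : Fin n × Fin n => (p.2, p.1)) := by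
  intro p q h; obtain ⟨a, b⟩ := p; obtain ⟨c, d⟩ := q
  simp only [Prod.mk.injEq, Fin.rev_inj] at h ⊢; tauto

private lemma injD' (n : ℕ) :
    Function.Injective (fun p : Fin n × Fin n => (p.2.rev, p.1.rev)) := by
  intro p q h; obtain ⟨a, b⟩ := p; obtain ⟨c, d⟩ := q
  simp only [Prod.mk.injEq, Fin.rev_inj] at h ⊢; tauto

private lemma lamsR0 (k : ℕ) (B : Finset (Fin (2*k) × Fin (2*k))) :
    lam1 k (B.image (fun p => p)) = lam1 k B ∧
    lam2 k (B.image (fun p => p)) = lam2 k B ∧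
    lam3 k (B.image (fun p => p)) = lam3 k B ∧
    lam4 k (B.image (fun p => p)) = lam4 k B := by
  unfold lam1 lam2 lam3 lam4
  refine ⟨?_, ?_, ?_, ?_⟩ <;>
    exact card_filter_image' (injR0 _) _ _ _ (fun p => Iff.rfl)

private lemma lamsR90 (k : ℕ) (B : Finset (Fin (2*k) × Fin (2*k))) :
    lam1 k (B.image (fun p => (p.2.rev, p.1))) = lam2 k B ∧
    lam2 k (B.image (fun p => (p.2.rev, p.1))) = lam3 k B ∧
    lam3 k (B.image (fun p => (p.2.rev, p.1))) = lam4 k B ∧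
    lam4 k (B.image (fun p => (p.2.rev, p.1))) = lam1 k B := by
  unfold lam1 lam2 lam3 lam4
  refine ⟨?_, ?_, ?_, ?_⟩ <;>
    exact card_filter_image' (injR90 _) _ _ _ (fun p => by
      have h1 := p.1.isLt; have h2 := p.2.isLt
      simp only [Fin.val_rev]; omega)

private lemma lamsR180 (k : ℕ) (B : Finset (Fin (2*k) × Fin (2*k))) :
    lam1 k (B.image (fun p => (p.1.rev, p.2.rev))) = lam3 k B ∧
    lam2 k (B.image (fun p => (p.1.rev, p.2.rev))) = lam4 k B ∧
    lam3 k (B.image (fun p => (p.1.rev, p.2.rev))) = lam1 k B ∧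
    lam4 k (B.image (fun p => (p.1.rev, p.2.rev))) = lam2 k B := by
  unfold lam1 lam2 lam3 lam4
  refine ⟨?_, ?_, ?_, ?_⟩ <;>
    exact card_filter_image' (injR180 _) _ _ _ (fun p => by
      have h1 := p.1.isLt; have h2 := p.2.isLt
      simp only [Fin.val_rev]; omega)

private lemma lamsR270 (k : ℕ) (B : Finset (Fin (2*k) × Fin (2*k))) :
    lam1 k (B.image (fun p => (p.2, p.1.rev))) = lam4 k B ∧
    lam2 k (B.image (fun p => (p.2, p.1.rev))) = lam1 k B ∧
    lam3 k (B.image (fun p => (p.2, p.1.rev))) = lam2 k B ∧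
    lam4 k (B.image (fun p => (p.2, p.1.rev))) = lam3 k B := by
  unfold lam1 lam2 lam3 lam4
  refine ⟨?_, ?_, ?_, ?_⟩ <;>
    exact card_filter_image' (injR270 _) _ _ _ (fun p => by
      have h1 := p.1.isLt; have h2 := p.2.isLt
      simp only [Fin.val_rev]; omega)

private lemma lamsH (k : ℕ) (B : Finset (Fin (2*k) × Fin (2*k))) :
    lam1 k (B.image (fun p => (p.1.rev, p.2))) = lam4 k B ∧
    lam2 k (B.image (fun p => (p.1.rev, p.2))) = lam3 k B ∧
    lam3 k (B.image (fun p => (p.1.rev, p.2))) = lam2 k B ∧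
    lam4 k (B.image (fun p => (p.1.rev, p.2))) = lam1 k B := by
  unfold lam1 lam2 lam3 lam4
  refine ⟨?_, ?_, ?_, ?_⟩ <;>
    exact card_filter_image' (injH _) _ _ _ (fun p => by
      have h1 := p.1.isLt; have h2 := p.2.isLt
      simp only [Fin.val_rev]; omega)

private lemma lamsV (k : ℕ) (B : Finset (Fin (2*k) × Fin (2*k))) :
    lam1 k (B.image (fun p => (p.1, p.2.rev))) = lam2 k B ∧
    lam2 k (B.image (fun p => (p.1, p.2.rev))) = lam1 k B ∧
    lam3 k (B.image (fun p => (p.1, p.2.rev))) = lam4 k B ∧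
    lam4 k (B.image (fun p => (p.1, p.2.rev))) = lam3 k B := by
  unfold lam1 lam2 lam3 lam4
  refine ⟨?_, ?_, ?_, ?_⟩ <;>
    exact card_filter_image' (injV _) _ _ _ (fun p => by
      have h1 := p.1.isLt; have h2 := p.2.isLt
      simp only [Fin.val_rev]; omega)

private lemma lamsD (k : ℕ) (B : Finset (Fin (2*k) × Fin (2*k))) :
    lam1 k (B.image (fun p => (p.2, p.1))) = lam1 k B ∧
    lam2 k (B.image (fun p => (p.2, p.1))) = lam4 k B ∧
    lam3 k (B.image (fun p => (p.2, p.1))) = lam3 k B ∧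
    lam4 k (B.image (fun p => (p.2, p.1))) = lam2 k B := by
  unfold lam1 lam2 lam3 lam4
  refine ⟨?_, ?_, ?_, ?_⟩ <;>
    exact card_filter_image' (injD _) _ _ _ (fun p => by
      have h1 := p.1.isLt; have h2 := p.2.isLt
      simp only [Fin.val_rev]; omega)

private lemma lamsD' (k : ℕ) (B : Finset (Fin (2*k) × Fin (2*k))) :
    lam1 k (B.image (fun p => (p.2.rev, p.1.rev))) = lam3 k B ∧
    lam2 k (B.image (fun p => (p.2.rev, p.1.rev))) = lam2 k B ∧
    lam3 k (B.image (fun p => (p.2.rev, p.1.rev))) = lam1 k B ∧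
    lam4 k (B.image (fun p => (p.2.rev, p.1.rev))) = lam4 k B := by
  unfold lam1 lam2 lam3 lam4
  refine ⟨?_, ?_, ?_, ?_⟩ <;>
    exact card_filter_image' (injD' _) _ _ _ (fun p => by
      have h1 := p.1.isLt; have h2 := p.2.isLt
      simp only [Fin.val_rev]; omega)

/-- (a) every board with `r` blockers on the `2k × 2k` grid is
equivalent under `D4` to a reduced board; (b) two equivalent reduced boards have
the same board partition. -/
theorem stmt_2 (k r : ℕ) (hk : 1 ≤ k) (hr1 : 1 ≤ r) (hr2 : r ≤ 4 * k ^ 2) :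
    (∀ B : Finset (Fin (2*k) × Fin (2*k)), B.card = r →
      ∃ B' : Finset (Fin (2*k) × Fin (2*k)), B'.card = r ∧ Reduced k B' ∧
        ∃ g ∈ D4 (2*k), B.image g = B') ∧
    (∀ B B' : Finset (Fin (2*k) × Fin (2*k)), B.card = r → B'.card = r →
      Reduced k B → Reduced k B' → (∃ g ∈ D4 (2*k), B.image g = B') →
      lam1 k B = lam1 k B' ∧ lam2 k B = lam2 k B' ∧
      lam3 k B = lam3 k B' ∧ lam4 k B = lam4 k B') := by
  constructor
  · intro B hB
    rcases exists_red (lam1 k B) (lam2 k B) (lam3 k B) (lam4 k B) with h|h|h|h|h|h|h|h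
    · refine ⟨B.image (fun p => p), ?_, ?_, _, by simp [D4], rfl⟩
      · rw [Finset.card_image_of_injective _ (injR0 _), hB]
      · obtain ⟨e1, e2, e3, e4⟩ := lamsR0 k B
        rw [reduced_iff, e1, e2, e3, e4]; exact h
    · refine ⟨B.image (fun p => (p.2.rev, p.1)), ?_, ?_, _, by simp [D4], rfl⟩
      · rw [Finset.card_image_of_injective _ (injR90 _), hB]
      · obtain ⟨e1, e2, e3, e4⟩ := lamsR90 k B
        rw [reduced_iff, e1, e2, e3, e4]; exact h
    · refine ⟨B.image (fun p => (p.1.rev, p.2.rev)), ?_, ?_, _, by simp [D4], rfl⟩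
      · rw [Finset.card_image_of_injective _ (injR180 _), hB]
      · obtain ⟨e1, e2, e3, e4⟩ := lamsR180 k B
        rw [reduced_iff, e1, e2, e3, e4]; exact h
    · refine ⟨B.image (fun p => (p.2, p.1.rev)), ?_, ?_, _, by simp [D4], rfl⟩
      · rw [Finset.card_image_of_injective _ (injR270 _), hB]
      · obtain ⟨e1, e2, e3, e4⟩ := lamsR270 k B
        rw [reduced_iff, e1, e2, e3, e4]; exact h
    · refine ⟨B.image (fun p => (p.2, p.1)), ?_, ?_, _, by simp [D4], rfl⟩
      · rw [Finset.card_image_of_injective _ (injD _), hB]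
      · obtain ⟨e1, e2, e3, e4⟩ := lamsD k B
        rw [reduced_iff, e1, e2, e3, e4]; exact h
    · refine ⟨B.image (fun p => (p.1, p.2.rev)), ?_, ?_, _, by simp [D4], rfl⟩
      · rw [Finset.card_image_of_injective _ (injV _), hB]
      · obtain ⟨e1, e2, e3, e4⟩ := lamsV k B
        rw [reduced_iff, e1, e2, e3, e4]; exact h
    · refine ⟨B.image (fun p => (p.2.rev, p.1.rev)), ?_, ?_, _, by simp [D4], rfl⟩
      · rw [Finset.card_image_of_injective _ (injD' _), hB]
      · obtain ⟨e1, e2, e3, e4⟩ := lamsD' k B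
        rw [reduced_iff, e1, e2, e3, e4]; exact h
    · refine ⟨B.image (fun p => (p.1.rev, p.2)), ?_, ?_, _, by simp [D4], rfl⟩
      · rw [Finset.card_image_of_injective _ (injH _), hB]
      · obtain ⟨e1, e2, e3, e4⟩ := lamsH k B
        rw [reduced_iff, e1, e2, e3, e4]; exact h
  · rintro B B' _ _ hR hR' ⟨g, hg, rfl⟩
    rw [reduced_iff] at hR hR'
    simp only [D4, Set.mem_insert_iff, Set.mem_singleton_iff] at hg
    rcases hg with rfl|rfl|rfl|rfl|rfl|rfl|rfl|rfl
    · obtain ⟨e1, e2, e3, e4⟩ := lamsR0 k B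
      rw [e1, e2, e3, e4] at hR' ⊢
      unfold RT at hR hR'; omega
    · obtain ⟨e1, e2, e3, e4⟩ := lamsR90 k B
      rw [e1, e2, e3, e4] at hR' ⊢
      unfold RT at hR hR'; omega
    · obtain ⟨e1, e2, e3, e4⟩ := lamsR180 k B
      rw [e1, e2, e3, e4] at hR' ⊢
      unfold RT at hR hR'; omega
    · obtain ⟨e1, e2, e3, e4⟩ := lamsR270 k B
      rw [e1, e2, e3, e4] at hR' ⊢
      unfold RT at hR hR'; omega
    · obtain ⟨e1, e2, e3, e4⟩ := lamsH k B
      rw [e1, e2, e3, e4] at hR' ⊢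
      unfold RT at hR hR'; omega
    · obtain ⟨e1, e2, e3, e4⟩ := lamsV k B
      rw [e1, e2, e3, e4] at hR' ⊢
      unfold RT at hR hR'; omega
    · obtain ⟨e1, e2, e3, e4⟩ := lamsD k B
      rw [e1, e2, e3, e4] at hR' ⊢
      unfold RT at hR hR'; omega
    · obtain ⟨e1, e2, e3, e4⟩ := lamsD' k B
      rw [e1, e2, e3, e4] at hR' ⊢
      unfold RT at hR hR'; omega
end

section
/- Let k ≥ 1, n = 2k, and 1 ≤ r ≤ 4k². Let N be the number of equivalence classes (orbits) of the set of all boards with r blockers on the n×n grid under the action of D4. Then 8·N = C(4k², r) + 2·(if 4 ∣ r then C(k², r/4) else 0) + 3·(if 2 ∣ r then C(2k², r/2) else 0) + 2·Σ_{t=0}^{r} (if 2 ∣ (r−t) then C(2k, t)·C(k(2k−1), (r−t)/2) else 0). -/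
/-- The orbit of a board `B` under a set of symmetries `Gs`. -/
def orbitOf {α : Type*} [DecidableEq α] (Gs : Set (α → α)) (B : Finset α) :
    Set (Finset α) :=
  {B' | ∃ g ∈ Gs, B.image g = B'}

open Finset Function MulAction
open scoped Pointwise

namespace MulAction

variable {G α : Type*} [Group G] [MulAction G α]

theorem natCard_fixedBy_conj (g h : G) :
    Nat.card (fixedBy α (h * g * h⁻¹)) = Nat.card (fixedBy α g) := by
  rw [← smul_fixedBy, Set.natCard_smul_set]

theorem sum_natCard_fixedBy [Fintype G] [Finite α] :
    ∑ g : G, Nat.card (fixedBy α g) = Nat.card (orbitRel.Quotient G α) * Nat.card G := by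
  classical
  have := Fintype.ofFinite α
  simpa only [Fintype.card_eq_nat_card] using sum_card_fixedBy_eq_card_orbits_mul_card_group G α

end MulAction

namespace SubMulAction

variable {G α : Type*} [Group G] [MulAction G α]

theorem ncard_setOf_orbit (s : SubMulAction G α) :
    {O : Set α | ∃ a ∈ s, O = orbit G a}.ncard = Nat.card (orbitRel.Quotient G s) := by
  have hinj : Injective fun q : orbitRel.Quotient G s => Subtype.val '' q.orbit :=
    (Set.image_injective.mpr Subtype.val_injective).comp orbitRel.Quotient.orbit_injective
  rw [← Set.ncard_range_of_injective hinj]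
  congr 1
  ext O
  constructor
  · rintro ⟨a, ha, rfl⟩
    exact ⟨Quotient.mk'' ⟨a, ha⟩, val_image_orbit _⟩
  · rintro ⟨q, rfl⟩
    induction q using Quotient.inductionOn' with
    | h a => exact ⟨a, a.2, val_image_orbit a⟩

variable (G α) [DecidableEq α]

def finsetsOfCard (r : ℕ) : SubMulAction G (Finset α) where
  carrier := {B | B.card = r}
  smul_mem' g B hB := (card_smul_finset g B).trans hB

theorem natCard_fixedBy_finsetsOfCard [Fintype α] (r : ℕ) (g : G) :
    Nat.card (fixedBy (finsetsOfCard G α r) g) =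
      #{B : Finset α | B.card = r ∧ g • B = B} := by
  rw [← Fintype.card_subtype, ← Nat.card_eq_fintype_card]
  exact Nat.card_congr
    { toFun := fun B => ⟨B.1.1, B.1.2, congrArg Subtype.val B.2⟩
      invFun := fun B => ⟨⟨B.1, B.2.1⟩, Subtype.ext B.2.2⟩ }

end SubMulAction

namespace DihedralGroup

variable {n : ℕ} {M : Type*} [Group M] {a b : M}

theorem pow_val_add [NeZero n] (ha : a ^ n = 1) (i j : ZMod n) :
    a ^ (i + j).val = a ^ i.val * a ^ j.val := by
  rw [ZMod.val_add, ← pow_eq_pow_mod _ ha, pow_add]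

theorem pow_val_sub [NeZero n] (ha : a ^ n = 1) (i j : ZMod n) :
    a ^ (j - i).val = (a ^ i.val)⁻¹ * a ^ j.val := by
  rw [eq_inv_mul_iff_mul_eq, ← pow_val_add ha, add_sub_cancel]

theorem pow_mul_eq_mul_inv_pow (hab : a * b = b * a⁻¹) (m : ℕ) :
    a ^ m * b = b * (a ^ m)⁻¹ := by
  induction m with
  | zero => simp
  | succ m ih =>
    calc a ^ (m + 1) * b = a ^ m * (a * b) := by rw [pow_succ, mul_assoc]
      _ = b * (a * a ^ m)⁻¹ := by rw [hab, ← mul_assoc, ih, mul_assoc, mul_inv_rev]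
      _ = b * (a ^ (m + 1))⁻¹ := by rw [pow_succ']

def lift [NeZero n] (a b : M) (ha : a ^ n = 1) (hb : b * b = 1) (hab : a * b = b * a⁻¹) :
    DihedralGroup n →* M where
  toFun
    | r i => a ^ i.val
    | sr i => b * a ^ i.val
  map_one' := show a ^ (0 : ZMod n).val = 1 by rw [ZMod.val_zero, pow_zero]
  map_mul' := by
    rintro (i | i) (j | j)
    · exact pow_val_add ha i j
    · show b * a ^ (j - i).val = a ^ i.val * (b * a ^ j.val)
      rw [pow_val_sub ha, ← mul_assoc (a ^ i.val), pow_mul_eq_mul_inv_pow hab, mul_assoc]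
    · show b * a ^ (i + j).val = b * a ^ i.val * a ^ j.val
      rw [pow_val_add ha, mul_assoc]
    · show a ^ (j - i).val = b * a ^ i.val * (b * a ^ j.val)
      rw [pow_val_sub ha, mul_assoc b, ← mul_assoc (a ^ i.val), pow_mul_eq_mul_inv_pow hab,
        ← mul_assoc, ← mul_assoc, hb, one_mul]

theorem sum_univ [NeZero n] {β : Type*} [AddCommMonoid β] (f : DihedralGroup n → β) :
    ∑ g, f g = ∑ i, f (r i) + ∑ i, f (sr i) := by
  rw [← equivSum.symm.sum_comp, Fintype.sum_sum_type]
  rfl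

theorem sum_univ_four {β : Type*} [AddCommMonoid β] (f : DihedralGroup 4 → β) :
    ∑ g, f g =
      f (r 0) + f (r 1) + f (r 2) + f (r 3) + (f (sr 0) + f (sr 1) + f (sr 2) + f (sr 3)) :=
  (sum_univ f).trans (congrArg₂ (· + ·) (Fin.sum_univ_four _) (Fin.sum_univ_four _))

theorem natCard_orbits_mul_eight {α : Type*} [MulAction (DihedralGroup 4) α]
    [Finite α] :
    Nat.card (orbitRel.Quotient (DihedralGroup 4) α) * 8 =
      Nat.card (fixedBy α (r 0 : DihedralGroup 4))
        + 2 * Nat.card (fixedBy α (r 1 : DihedralGroup 4))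
        + Nat.card (fixedBy α (r 2 : DihedralGroup 4))
        + 2 * Nat.card (fixedBy α (sr 0 : DihedralGroup 4))
        + 2 * Nat.card (fixedBy α (sr 3 : DihedralGroup 4)) := by
  have h₁ : (r 3 : DihedralGroup 4) = sr 0 * r 1 * (sr 0)⁻¹ := by decide
  have h₂ : (sr 1 : DihedralGroup 4) = r 1 * sr 3 * (r 1)⁻¹ := by decide
  have h₃ : (sr 2 : DihedralGroup 4) = r 1 * sr 0 * (r 1)⁻¹ := by decide
  rw [show 8 = Nat.card (DihedralGroup 4) by rw [nat_card], ← sum_natCard_fixedBy,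
    sum_univ_four, h₁, h₂, h₃, natCard_fixedBy_conj, natCard_fixedBy_conj,
    natCard_fixedBy_conj]
  ring

end DihedralGroup

section InvariantFinsets

theorem card_filter_powerset_mul_card_eq {β : Type*} (C : Finset β) {d : ℕ} (hd : 0 < d)
    (m : ℕ) : #{S ∈ C.powerset | d * #S = m} = if d ∣ m then (#C).choose (m / d) else 0 := by
  split_ifs with hdm
  · obtain ⟨q, rfl⟩ := hdm
    rw [Nat.mul_div_cancel_left q hd, ← card_powersetCard, powersetCard_eq_filter]
    simp only [mul_right_inj' hd.ne']
  · rw [card_eq_zero, filter_eq_empty_iff]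
    rintro S - rfl
    exact hdm (dvd_mul_right d _)

theorem card_filter_powerset_product {α β : Type*} (A : Finset α) (C : Finset β) {d : ℕ}
    (hd : 0 < d) (r : ℕ) :
    #{p ∈ A.powerset ×ˢ C.powerset | #p.1 + d * #p.2 = r} =
      ∑ t ∈ range (r + 1),
        if d ∣ r - t then (#A).choose t * (#C).choose ((r - t) / d) else 0 := by
  rw [card_eq_sum_card_fiberwise (f := fun p => #p.1) (t := range (r + 1))]
  · refine sum_congr rfl fun t ht => ?_
    have htr := mem_range.mp ht
    have hfiber : {p ∈ {p ∈ A.powerset ×ˢ C.powerset | #p.1 + d * #p.2 = r} | #p.1 = t} =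
        powersetCard t A ×ˢ {S ∈ C.powerset | d * #S = r - t} := by
      ext ⟨T, S⟩
      simp only [mem_filter, mem_product, mem_powerset, mem_powersetCard]
      constructor
      · rintro ⟨⟨⟨hT, hS⟩, hr⟩, rfl⟩
        exact ⟨⟨hT, rfl⟩, hS, by omega⟩
      · rintro ⟨⟨hT, rfl⟩, hS, hr⟩
        exact ⟨⟨⟨hT, hS⟩, by omega⟩, rfl⟩
    rw [hfiber, card_product, card_powersetCard, card_filter_powerset_mul_card_eq C hd]
    split_ifs <;> simp
  · intro p hp
    rw [mem_coe, mem_filter] at hp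
    simp only [coe_range, Set.mem_Iio]
    omega

variable {X : Type*}

/-- `f` fixes `Δ` pointwise, and every other orbit of `f` is a `d`-cycle meeting `F` once. -/
structure IsCycleTransversal (f : X → X) (d : ℕ) (Δ F : Finset X) : Prop where
  injective : Injective f
  fixed : ∀ x ∈ Δ, f x = x
  iterate_period : ∀ x ∈ F, f^[d] x = x
  disjoint : Disjoint Δ F
  iterate_notMem : ∀ x ∈ F, ∀ i, 0 < i → i < d → f^[i] x ∉ F
  exists_iterate_mem : ∀ y ∉ Δ, ∃ i < d, f^[i] y ∈ F

theorem IsCycleTransversal.of_involutive {f : X → X} {Δ F : Finset X} (hf : Involutive f)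
    (hΔ : ∀ x ∈ Δ, f x = x) (hdisj : Disjoint Δ F) (hF : ∀ x ∈ F, f x ∉ F)
    (hcover : ∀ y ∉ Δ, y ∈ F ∨ f y ∈ F) : IsCycleTransversal f 2 Δ F where
  injective := hf.injective
  fixed := hΔ
  iterate_period x _ := hf x
  disjoint := hdisj
  iterate_notMem x hx i hi0 hi2 := by
    obtain rfl : i = 1 := by omega
    exact hF x hx
  exists_iterate_mem y hy :=
    (hcover y hy).elim (fun h => ⟨0, two_pos, h⟩) (fun h => ⟨1, one_lt_two, h⟩)

def cycleUnion [DecidableEq X] (f : X → X) (d : ℕ) (T S : Finset X) : Finset X :=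
  T ∪ (S ×ˢ range d).image fun p => f^[p.2] p.1

theorem mem_cycleUnion [DecidableEq X] {f : X → X} {d : ℕ} {T S : Finset X} {y : X} :
    y ∈ cycleUnion f d T S ↔ y ∈ T ∨ ∃ x ∈ S, ∃ i < d, f^[i] x = y := by
  simp [cycleUnion, and_assoc]

def invariantFinsets [Fintype X] [DecidableEq X] (f : X → X) (r : ℕ) : Finset (Finset X) :=
  {B | B.card = r ∧ B.image f = B}

theorem card_invariantFinsets_id [Fintype X] [DecidableEq X] (r : ℕ) :
    #(invariantFinsets (id : X → X) r) = (Fintype.card X).choose r := by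
  simp only [invariantFinsets, image_id, and_true]
  rw [← card_univ, ← card_powersetCard, powersetCard_eq_filter, powerset_univ]

namespace IsCycleTransversal

variable {f : X → X} {d : ℕ} {Δ F T S : Finset X} (h : IsCycleTransversal f d Δ F)
include h

theorem isPeriodicPt (y : X) : IsPeriodicPt f d y := by
  by_cases hy : y ∈ Δ
  · exact IsFixedPt.iterate (h.fixed y hy) d
  obtain ⟨i, -, hi⟩ := h.exists_iterate_mem y hy
  apply h.injective.iterate i
  rw [← iterate_add_apply, add_comm, iterate_add_apply, h.iterate_period _ hi]

theorem iterate_sub_mod_iterate {i : ℕ} (hi : i ≤ d) (y : X) :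
    f^[(d - i) % d] (f^[i] y) = y := by
  rw [(h.isPeriodicPt _).iterate_mod_apply, ← iterate_add_apply, Nat.sub_add_cancel hi]
  exact h.isPeriodicPt y

theorem iterate_notMem_fixed {x : X} (hx : x ∈ F) (i : ℕ) : f^[i] x ∉ Δ := by
  intro hΔ
  have hxi : f^[i] x = x := h.injective.iterate i (IsFixedPt.iterate (h.fixed _ hΔ) i)
  exact disjoint_left.mp h.disjoint (hxi ▸ hΔ) hx

theorem eq_of_iterate_eq_of_le {x y : X} (hx : x ∈ F) (hy : y ∈ F) {i j : ℕ} (hij : i ≤ j)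
    (hj : j < d) (he : f^[i] x = f^[j] y) : x = y ∧ i = j := by
  obtain ⟨m, rfl⟩ := Nat.exists_eq_add_of_le hij
  rw [iterate_add_apply] at he
  have hxm : x = f^[m] y := h.injective.iterate i he
  rcases Nat.eq_zero_or_pos m with rfl | hm
  · exact ⟨hxm, rfl⟩
  · exact absurd (hxm ▸ hx) (h.iterate_notMem y hy m hm (by omega))

theorem injOn_iterate : Set.InjOn (fun p : X × ℕ => f^[p.2] p.1) ↑(F ×ˢ range d) := by
  rintro ⟨x, i⟩ hxi ⟨y, j⟩ hyj he
  simp only [coe_product, coe_range, Set.mem_prod, mem_coe, Set.mem_Iio] at hxi hyj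
  rcases le_total i j with hij | hij
  · obtain ⟨rfl, rfl⟩ := h.eq_of_iterate_eq_of_le hxi.1 hyj.1 hij hyj.2 he
    rfl
  · obtain ⟨rfl, rfl⟩ := h.eq_of_iterate_eq_of_le hyj.1 hxi.1 hij hxi.2 he.symm
    rfl

variable [DecidableEq X]

theorem card_cycleUnion (hT : T ⊆ Δ) (hS : S ⊆ F) :
    #(cycleUnion f d T S) = #T + d * #S := by
  rw [cycleUnion, card_union_of_disjoint, card_image_of_injOn, card_product, card_range,
    mul_comm]
  · exact h.injOn_iterate.mono (coe_subset.mpr (product_subset_product_left hS))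
  · rw [disjoint_right]
    simp only [mem_image, mem_product, mem_range, Prod.exists]
    rintro _ ⟨x, i, ⟨hx, -⟩, rfl⟩ hT'
    exact h.iterate_notMem_fixed (hS hx) i (hT hT')

theorem image_cycleUnion (hT : T ⊆ Δ) :
    (cycleUnion f d T S).image f = cycleUnion f d T S := by
  refine eq_of_subset_of_card_le (fun z hz => ?_) (card_image_of_injective _ h.injective).ge
  obtain ⟨y, hy, rfl⟩ := mem_image.mp hz
  rw [mem_cycleUnion] at hy ⊢
  rcases hy with hy | ⟨x, hx, i, hi, rfl⟩
  · exact .inl ((h.fixed y (hT hy)).symm ▸ hy)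
  · refine .inr ⟨x, hx, (i + 1) % d, Nat.mod_lt _ (by omega), ?_⟩
    rw [(h.isPeriodicPt x).iterate_mod_apply, iterate_succ_apply']

theorem cycleUnion_inter_fixed (hT : T ⊆ Δ) (hS : S ⊆ F) : cycleUnion f d T S ∩ Δ = T := by
  ext y
  simp only [mem_inter, mem_cycleUnion]
  constructor
  · rintro ⟨hy | ⟨x, hx, i, -, rfl⟩, hyΔ⟩
    · exact hy
    · exact absurd hyΔ (h.iterate_notMem_fixed (hS hx) i)
  · exact fun hy => ⟨.inl hy, hT hy⟩

theorem cycleUnion_inter_transversal (hT : T ⊆ Δ) (hS : S ⊆ F) :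
    cycleUnion f d T S ∩ F = S := by
  ext y
  simp only [mem_inter, mem_cycleUnion]
  constructor
  · rintro ⟨hy | ⟨x, hx, i, hi, rfl⟩, hyF⟩
    · exact absurd hyF (disjoint_left.mp h.disjoint (hT hy))
    · obtain ⟨-, rfl⟩ := h.eq_of_iterate_eq_of_le hyF (hS hx) (Nat.zero_le i) hi rfl
      exact hx
  · intro hy
    obtain ⟨i, hi, -⟩ := h.exists_iterate_mem y (disjoint_right.mp h.disjoint (hS hy))
    exact ⟨.inr ⟨y, hy, 0, by omega, rfl⟩, hS hy⟩

theorem cycleUnion_inter_inter {B : Finset X} (hB : B.image f = B) :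
    cycleUnion f d (B ∩ Δ) (B ∩ F) = B := by
  have hmaps : ∀ i, Set.MapsTo f^[i] B B :=
    Set.MapsTo.iterate fun x hx => hB ▸ mem_image_of_mem f hx
  ext y
  simp only [mem_cycleUnion, mem_inter]
  constructor
  · rintro (hy | ⟨x, ⟨hx, -⟩, i, -, rfl⟩)
    · exact hy.1
    · exact hmaps i hx
  · intro hy
    by_cases hyΔ : y ∈ Δ
    · exact .inl ⟨hy, hyΔ⟩
    obtain ⟨i, hi, hiF⟩ := h.exists_iterate_mem y hyΔ
    exact .inr ⟨_, ⟨hmaps i hy, hiF⟩, (d - i) % d, Nat.mod_lt _ (by omega),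
      h.iterate_sub_mod_iterate hi.le y⟩

variable [Fintype X]

theorem card_invariantFinsets (hd : 0 < d) (r : ℕ) :
    #(invariantFinsets f r) =
      ∑ t ∈ range (r + 1),
        if d ∣ r - t then (#Δ).choose t * (#F).choose ((r - t) / d) else 0 := by
  rw [← card_filter_powerset_product Δ F hd r]
  refine card_bij' (fun B _ => (B ∩ Δ, B ∩ F)) (fun p _ => cycleUnion f d p.1 p.2)
    (fun B hB => ?_) (fun p hp => ?_) (fun B hB => ?_) (fun p hp => ?_)
  · simp only [invariantFinsets, mem_filter, mem_univ, true_and] at hB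
    simp only [mem_filter, mem_product, mem_powerset]
    refine ⟨⟨inter_subset_right, inter_subset_right⟩, ?_⟩
    rw [← h.card_cycleUnion inter_subset_right inter_subset_right,
      h.cycleUnion_inter_inter hB.2, hB.1]
  · simp only [mem_filter, mem_product, mem_powerset] at hp
    simp only [invariantFinsets, mem_filter, mem_univ, true_and]
    exact ⟨(h.card_cycleUnion hp.1.1 hp.1.2).trans hp.2, h.image_cycleUnion hp.1.1⟩
  · simp only [invariantFinsets, mem_filter, mem_univ, true_and] at hB
    exact h.cycleUnion_inter_inter hB.2
  · simp only [mem_filter, mem_product, mem_powerset] at hp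
    exact Prod.ext (h.cycleUnion_inter_fixed hp.1.1 hp.1.2)
      (h.cycleUnion_inter_transversal hp.1.1 hp.1.2)

theorem card_eq_card_add_mul_card : Fintype.card X = #Δ + d * #F := by
  have hB : (univ : Finset X).image f = univ :=
    image_univ_of_surjective (Finite.surjective_of_injective h.injective)
  rw [← card_univ, ← h.cycleUnion_inter_inter hB, univ_inter, univ_inter,
    h.card_cycleUnion subset_rfl subset_rfl]

end IsCycleTransversal

theorem IsCycleTransversal.card_invariantFinsets_of_fixed_empty [Fintype X] [DecidableEq X]
    {f : X → X} {d : ℕ} {F : Finset X} (h : IsCycleTransversal f d ∅ F) (hd : 0 < d)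
    (r : ℕ) :
    #(invariantFinsets f r) = if d ∣ r then (Fintype.card X / d).choose (r / d) else 0 := by
  rw [h.card_eq_card_add_mul_card, card_empty, zero_add, Nat.mul_div_cancel_left _ hd,
    h.card_invariantFinsets hd, sum_eq_single_of_mem 0 (by simp)]
  · simp
  · intro t _ ht
    simp [Nat.choose_eq_zero_of_lt (Nat.pos_of_ne_zero ht)]

end InvariantFinsets

section Grid

def gridRotation (n : ℕ) : Equiv.Perm (Fin n × Fin n) where
  toFun p := (p.2.rev, p.1)
  invFun p := (p.2, p.1.rev)
  left_inv p := by simp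
  right_inv p := by simp

@[simp]
theorem gridRotation_apply (n : ℕ) (p : Fin n × Fin n) : gridRotation n p = (p.2.rev, p.1) :=
  rfl

-- `r i` acts as `R90^i`, and `sr 0, sr 1, sr 2, sr 3` act as `D, V, D′, H`.
def gridSymmetry (n : ℕ) : DihedralGroup 4 →* Equiv.Perm (Fin n × Fin n) :=
  DihedralGroup.lift (gridRotation n) (Equiv.prodComm _ _) (by ext p <;> simp [pow_succ])
    (Equiv.ext fun _ => rfl) (Equiv.ext fun _ => rfl)

@[simp]
theorem gridSymmetry_r_apply (n : ℕ) (i : ZMod 4) (p : Fin n × Fin n) :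
    gridSymmetry n (.r i) p = (gridRotation n ^ i.val) p :=
  rfl

@[simp]
theorem gridSymmetry_sr_apply (n : ℕ) (i : ZMod 4) (p : Fin n × Fin n) :
    gridSymmetry n (.sr i) p = ((gridRotation n ^ i.val) p).swap :=
  rfl

attribute [local simp] ZMod.val_one_eq_one_mod ZMod.val_ofNat pow_succ

instance (n : ℕ) : MulAction (DihedralGroup 4) (Fin n × Fin n) :=
  MulAction.compHom _ (gridSymmetry n)

theorem range_gridSymmetry (n : ℕ) : Set.range (fun g => ⇑(gridSymmetry n g)) = D4 n := by
  have zmod_four : ∀ i : ZMod 4, i = 0 ∨ i = 1 ∨ i = 2 ∨ i = 3 := by decide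
  ext f
  simp only [D4, Set.mem_range, Set.mem_insert_iff, Set.mem_singleton_iff]
  constructor
  · rintro ⟨g, rfl⟩
    rcases g with i | i <;> rcases zmod_four i with rfl | rfl | rfl | rfl <;> simp [funext_iff]
  · rintro (rfl | rfl | rfl | rfl | rfl | rfl | rfl | rfl) <;>
      [use .r 0; use .r 1; use .r 2; use .r 3; use .sr 3; use .sr 1; use .sr 0; use .sr 2] <;>
      funext p <;> simp [Prod.swap]

theorem orbitOf_D4 (n : ℕ) (B : Finset (Fin n × Fin n)) :
    orbitOf (D4 n) B = orbit (DihedralGroup 4) B := by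
  ext C
  simp only [orbitOf, ← range_gridSymmetry, Set.mem_ofPred_eq, Set.exists_range_iff,
    mem_orbit_iff]
  rfl

theorem natCard_fixedBy_finsetsOfCard_grid (n r : ℕ) (g : DihedralGroup 4) :
    Nat.card (fixedBy (SubMulAction.finsetsOfCard (DihedralGroup 4) (Fin n × Fin n) r) g) =
      #(invariantFinsets (gridSymmetry n g) r) :=
  SubMulAction.natCard_fixedBy_finsetsOfCard _ _ r g

theorem isCycleTransversal_gridSymmetry_r_one (k : ℕ) :
    IsCycleTransversal (gridSymmetry (2 * k) (.r 1)) 4 ∅ {p | p.1 < k ∧ p.2 < k} where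
  injective := (gridSymmetry _ _).injective
  fixed := by simp
  iterate_period x _ := by simp
  disjoint := disjoint_empty_left _
  iterate_notMem x hx i hi0 hi := by
    have := x.1.isLt
    have := x.2.isLt
    interval_cases i <;> simp at hx ⊢ <;> omega
  exists_iterate_mem y _ := by
    have := y.1.isLt
    have := y.2.isLt
    rcases lt_or_ge y.1.val k with h1 | h1 <;> rcases lt_or_ge y.2.val k with h2 | h2
    · exact ⟨0, by norm_num, by simp [h1, h2]⟩
    · exact ⟨1, by norm_num, by simp; omega⟩
    · exact ⟨3, by norm_num, by simp; omega⟩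
    · exact ⟨2, by norm_num, by simp; omega⟩

theorem isCycleTransversal_gridSymmetry_r_two (k : ℕ) :
    IsCycleTransversal (gridSymmetry (2 * k) (.r 2)) 2 ∅ {p | p.1 < k} := by
  refine .of_involutive (fun p => by simp) (by simp) (disjoint_empty_left _) ?_ ?_
  · intro x hx
    simp at hx ⊢
    omega
  · intro y _
    have := y.1.isLt
    simp
    omega

theorem isCycleTransversal_gridSymmetry_sr_three (k : ℕ) :
    IsCycleTransversal (gridSymmetry (2 * k) (.sr 3)) 2 ∅ {p | p.1 < k} := by
  refine .of_involutive (fun p => by simp) (by simp) (disjoint_empty_left _) ?_ ?_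
  · intro x hx
    simp at hx ⊢
    omega
  · intro y _
    have := y.1.isLt
    simp
    omega

theorem isCycleTransversal_gridSymmetry_sr_zero (n : ℕ) :
    IsCycleTransversal (gridSymmetry n (.sr 0)) 2 univ.diag {p | p.1 < p.2} := by
  refine .of_involutive (fun p => by simp) (fun x hx => ?_) ?_ ?_ ?_
  · simp only [mem_diag] at hx
    simp [Prod.swap, Prod.ext_iff, hx.2]
  · rw [disjoint_left]
    intro x hx
    simp only [mem_diag] at hx
    simp [hx.2]
  · intro x hx
    simp at hx ⊢
    omega
  · intro y hy
    simp at hy ⊢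
    omega

theorem card_invariantFinsets_gridSymmetry_r_one (k r : ℕ) :
    #(invariantFinsets (gridSymmetry (2 * k) (.r 1)) r) =
      if 4 ∣ r then (k ^ 2).choose (r / 4) else 0 := by
  rw [(isCycleTransversal_gridSymmetry_r_one k).card_invariantFinsets_of_fixed_empty four_pos,
    Fintype.card_prod, Fintype.card_fin, show 2 * k * (2 * k) / 4 = k ^ 2 by ring_nf; omega]

theorem card_invariantFinsets_gridSymmetry_r_two (k r : ℕ) :
    #(invariantFinsets (gridSymmetry (2 * k) (.r 2)) r) =
      if 2 ∣ r then (2 * k ^ 2).choose (r / 2) else 0 := by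
  rw [(isCycleTransversal_gridSymmetry_r_two k).card_invariantFinsets_of_fixed_empty two_pos,
    Fintype.card_prod, Fintype.card_fin, show 2 * k * (2 * k) / 2 = 2 * k ^ 2 by ring_nf; omega]

theorem card_invariantFinsets_gridSymmetry_sr_three (k r : ℕ) :
    #(invariantFinsets (gridSymmetry (2 * k) (.sr 3)) r) =
      if 2 ∣ r then (2 * k ^ 2).choose (r / 2) else 0 := by
  rw [(isCycleTransversal_gridSymmetry_sr_three k).card_invariantFinsets_of_fixed_empty two_pos,
    Fintype.card_prod, Fintype.card_fin, show 2 * k * (2 * k) / 2 = 2 * k ^ 2 by ring_nf; omega]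

theorem card_invariantFinsets_gridSymmetry_sr_zero (n r : ℕ) :
    #(invariantFinsets (gridSymmetry n (.sr 0)) r) =
      ∑ t ∈ range (r + 1),
        if 2 ∣ r - t then n.choose t * (n.choose 2).choose ((r - t) / 2) else 0 := by
  have h := isCycleTransversal_gridSymmetry_sr_zero n
  have hF := h.card_eq_card_add_mul_card
  have hΔ : #(univ : Finset (Fin n)).diag = n := by rw [diag_card, card_fin]
  simp only [Fintype.card_prod, Fintype.card_fin, hΔ] at hF
  rw [h.card_invariantFinsets two_pos, hΔ, show #_ = n.choose 2 by
    rw [Nat.choose_two_right, Nat.mul_sub_one]; omega]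

end Grid

theorem stmt_10_general (k r : ℕ) :
    8 * Set.ncard {O : Set (Finset (Fin (2*k) × Fin (2*k))) |
        ∃ B : Finset (Fin (2*k) × Fin (2*k)), B.card = r ∧ O = orbitOf (D4 (2*k)) B} =
      Nat.choose (4 * k ^ 2) r
      + 2 * (if 4 ∣ r then Nat.choose (k ^ 2) (r / 4) else 0)
      + 3 * (if 2 ∣ r then Nat.choose (2 * k ^ 2) (r / 2) else 0)
      + 2 * ∑ t ∈ Finset.range (r + 1),
          (if 2 ∣ (r - t) then
            Nat.choose (2 * k) t * Nat.choose (k * (2 * k - 1)) ((r - t) / 2)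
          else 0) := by
  have horbits : {O : Set (Finset (Fin (2*k) × Fin (2*k))) |
        ∃ B : Finset (Fin (2*k) × Fin (2*k)), B.card = r ∧ O = orbitOf (D4 (2*k)) B} =
      {O | ∃ B ∈ SubMulAction.finsetsOfCard (DihedralGroup 4) (Fin (2*k) × Fin (2*k)) r,
        O = orbit (DihedralGroup 4) B} := by
    simp_rw [orbitOf_D4]
    rfl
  have hchoose : (2 * k).choose 2 = k * (2 * k - 1) := by
    rw [Nat.choose_two_right, mul_assoc, Nat.mul_div_cancel_left _ two_pos]
  rw [horbits, SubMulAction.ncard_setOf_orbit, mul_comm, DihedralGroup.natCard_orbits_mul_eight]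
  simp only [natCard_fixedBy_finsetsOfCard_grid]
  rw [DihedralGroup.r_zero, map_one, Equiv.Perm.coe_one, card_invariantFinsets_id,
    card_invariantFinsets_gridSymmetry_r_one, card_invariantFinsets_gridSymmetry_r_two,
    card_invariantFinsets_gridSymmetry_sr_zero, card_invariantFinsets_gridSymmetry_sr_three,
    hchoose]
  simp only [Fintype.card_prod, Fintype.card_fin]
  ring_nf

/-- Burnside count, even square boards: with `N` the number of
orbits of boards with `r` blockers on the `2k × 2k` grid under `D4`,
`8N = C(4k²,r) + 2·[4∣r]·C(k²,r/4) + 3·[2∣r]·C(2k²,r/2)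
      + 2·Σ_{t=0}^{r} [2∣(r−t)]·C(2k,t)·C(k(2k−1),(r−t)/2)`. -/
theorem stmt_10 (k r : ℕ) (hk : 1 ≤ k) (hr1 : 1 ≤ r) (hr2 : r ≤ 4 * k ^ 2) :
    8 * Set.ncard {O : Set (Finset (Fin (2*k) × Fin (2*k))) |
        ∃ B : Finset (Fin (2*k) × Fin (2*k)), B.card = r ∧ O = orbitOf (D4 (2*k)) B} =
      Nat.choose (4 * k ^ 2) r
      + 2 * (if 4 ∣ r then Nat.choose (k ^ 2) (r / 4) else 0)
      + 3 * (if 2 ∣ r then Nat.choose (2 * k ^ 2) (r / 2) else 0)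
      + 2 * ∑ t ∈ Finset.range (r + 1),
          (if 2 ∣ (r - t) then
            Nat.choose (2 * k) t * Nat.choose (k * (2 * k - 1)) ((r - t) / 2)
          else 0) :=
  stmt_10_general k r
end

section
/- Let k ≥ 1, n = 2k+1, and 1 ≤ r ≤ n². Let N be the number of equivalence classes (orbits) of the set of all boards with r blockers on the n×n grid under the action of D4. Then 8·N = C((2k+1)², r) + 2·(if 4 ∣ r then C(k(k+1), r/4) else 0) + 2·(if 4 ∣ (r−1) then C(k(k+1), (r−1)/4) else 0) + C(2k(k+1), ⌊r/2⌋) + 4·Σ_{t=0}^{r} (if 2 ∣ (r−t) then C(2k+1, t)·C(k(2k+1), (r−t)/2) else 0). -/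
section Master
variable {α : Type*} [Fintype α] [DecidableEq α]

lemma invariant_count (f : α → α) (hf : Function.Injective f)
    (d r : ℕ) (hd : 0 < d)
    (A C : Finset α) (Cs : ℕ → Finset α)
    (hC0 : Cs 0 = C)
    (himg : ∀ i, i + 1 < d → Cs (i + 1) = (Cs i).image f)
    (hA : ∀ a ∈ A, f a = a)
    (hCd : ∀ c ∈ C, f^[d] c = c)
    (hcover : ∀ x, x ∈ A ∨ ∃ i, i < d ∧ x ∈ Cs i)
    (hdAC : ∀ i, i < d → Disjoint A (Cs i))
    (hdCC : ∀ i j, i < d → j < d → i ≠ j → Disjoint (Cs i) (Cs j)) :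
    Nat.card {B : Finset α // B.card = r ∧ B.image f = B} =
      ∑ t ∈ Finset.range (r + 1),
        if d ∣ (r - t) then A.card.choose t * C.card.choose ((r - t) / d) else 0 := by
  classical
  -- basic facts
  have hCs : ∀ i, i < d → Cs i = C.image f^[i] := by
    intro i
    induction i with
    | zero => intro _; simpa using hC0
    | succ n ih =>
      intro hn
      rw [himg n hn, ih (by omega), Finset.image_image, Function.iterate_succ']
  have hfi : ∀ m : ℕ, Function.Injective (f^[m]) := fun m => hf.iterate m
  -- invariant sets are closed under iterates
  have hmemit : ∀ (B : Finset α), B.image f = B → ∀ m, ∀ b ∈ B, f^[m] b ∈ B := by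
    intro B hB m
    induction m with
    | zero => simpa using fun b hb => hb
    | succ n ih =>
      intro b hb
      rw [Function.iterate_succ']
      have := ih b hb
      rw [← hB]
      exact Finset.mem_image_of_mem f this
  set U : Finset α → Finset α := fun S => (Finset.range d).biUnion (fun i => S.image f^[i]) with hU
  have hUsub : ∀ S, S ⊆ C → ∀ i, i < d → S.image f^[i] ⊆ Cs i := by
    intro S hS i hi
    rw [hCs i hi]
    exact Finset.image_subset_image hS
  have hUcard : ∀ S, S ⊆ C → (U S).card = d * S.card := by
    intro S hS
    rw [hU]
    rw [Finset.card_biUnion]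
    · rw [Finset.sum_congr rfl (fun i _ => Finset.card_image_of_injective S (hfi i))]
      simp [mul_comm]
    · intro i hi j hj hij
      exact (hdCC i j (Finset.mem_range.mp hi) (Finset.mem_range.mp hj) hij).mono
        (hUsub S hS i (Finset.mem_range.mp hi)) (hUsub S hS j (Finset.mem_range.mp hj))
  have hUimg : ∀ S, S ⊆ C → (U S).image f = U S := by
    intro S hS
    rw [hU]
    simp only [Finset.biUnion_image, Finset.image_image]
    simp only [← Function.iterate_succ']
    ext x
    simp only [Finset.mem_biUnion, Finset.mem_range, Finset.mem_image]
    constructor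
    · rintro ⟨i, hi, s, hs, rfl⟩
      by_cases hsucc : i + 1 < d
      · exact ⟨i + 1, hsucc, s, hs, rfl⟩
      · have hieq : i + 1 = d := by omega
        exact ⟨0, hd, s, hs, by
          rw [show i.succ = d by omega, hCd s (hS hs), Function.iterate_zero_apply]⟩
    · rintro ⟨i, hi, s, hs, rfl⟩
      rcases Nat.eq_zero_or_pos i with h0 | hpos
      · refine ⟨d - 1, by omega, s, hs, ?_⟩
        rw [show (d - 1).succ = d by omega, hCd s (hS hs), h0, Function.iterate_zero_apply]
      · refine ⟨i - 1, by omega, s, hs, ?_⟩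
        congr 1
        omega
  have hTimg : ∀ T, T ⊆ A → T.image f = T := by
    intro T hT
    have : T.image f = T.image id := Finset.image_congr (fun x hx => hA x (hT hx))
    rw [this, Finset.image_id]
  have hTU : ∀ T, T ⊆ A → ∀ S, S ⊆ C → Disjoint T (U S) := by
    intro T hT S hS
    rw [Finset.disjoint_left]
    intro x hxT hxU
    rcases Finset.mem_biUnion.mp hxU with ⟨i, hi, hxi⟩
    have hxCs : x ∈ Cs i := hUsub S hS i (Finset.mem_range.mp hi) hxi
    exact (Finset.disjoint_left.mp (hdAC i (Finset.mem_range.mp hi)) (hT hxT)) hxCs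
  have hUC : ∀ S, S ⊆ C → U S ∩ C = S := by
    intro S hS
    ext x
    constructor
    · intro hx
      rcases Finset.mem_inter.mp hx with ⟨hxU, hxC⟩
      rcases Finset.mem_biUnion.mp hxU with ⟨i, hi, hxi⟩
      rcases Nat.eq_zero_or_pos i with h0 | hpos
      · rw [h0] at hxi; simpa using hxi
      · exfalso
        have h1 : x ∈ Cs i := hUsub S hS i (Finset.mem_range.mp hi) hxi
        have h2 : x ∈ Cs 0 := by rw [hC0]; exact hxC
        exact (Finset.disjoint_left.mp
          (hdCC i 0 (Finset.mem_range.mp hi) hd (by omega)) h1) h2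
    · intro hx
      refine Finset.mem_inter.mpr ⟨?_, hS hx⟩
      exact Finset.mem_biUnion.mpr ⟨0, Finset.mem_range.mpr hd, by simpa using hx⟩
  have hdecomp : ∀ B : Finset α, B.image f = B → B = (B ∩ A) ∪ U (B ∩ C) := by
    intro B hB
    ext x
    constructor
    · intro hx
      rcases hcover x with hxA | ⟨i, hi, hxC⟩
      · exact Finset.mem_union_left _ (Finset.mem_inter.mpr ⟨hx, hxA⟩)
      · refine Finset.mem_union_right _ ?_
        rw [hCs i hi] at hxC
        rcases Finset.mem_image.mp hxC with ⟨c, hc, rfl⟩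
        have hcB : c ∈ B := by
          have h1 : f^[d - i] (f^[i] c) ∈ B := hmemit B hB _ _ hx
          rwa [← Function.iterate_add_apply, show d - i + i = d by omega, hCd c hc] at h1
        exact Finset.mem_biUnion.mpr ⟨i, Finset.mem_range.mpr hi,
          Finset.mem_image_of_mem _ (Finset.mem_inter.mpr ⟨hcB, hc⟩)⟩
    · intro hx
      rcases Finset.mem_union.mp hx with h | h
      · exact (Finset.mem_inter.mp h).1
      · rcases Finset.mem_biUnion.mp h with ⟨i, _, hxi⟩
        rcases Finset.mem_image.mp hxi with ⟨c, hc, rfl⟩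
        exact hmemit B hB i c (Finset.mem_inter.mp hc).1
  rw [Nat.card_eq_fintype_card, Fintype.card_subtype]
  have key : (Finset.univ.filter (fun B : Finset α => B.card = r ∧ B.image f = B)).card
      = ((A.powerset ×ˢ C.powerset).filter
          (fun q : Finset α × Finset α => q.1.card + d * q.2.card = r)).card := by
    apply Finset.card_bij' (fun B _ => (B ∩ A, B ∩ C)) (fun q _ => q.1 ∪ U q.2)
    · intro B hB
      simp only [Finset.mem_filter, Finset.mem_univ, true_and] at hB
      obtain ⟨hBr, hBinv⟩ := hB
      simp only [Finset.mem_filter, Finset.mem_product, Finset.mem_powerset]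
      refine ⟨⟨Finset.inter_subset_right, Finset.inter_subset_right⟩, ?_⟩
      have h1 : B.card = (B ∩ A).card + d * (B ∩ C).card := by
        conv_lhs => rw [hdecomp B hBinv]
        rw [Finset.card_union_of_disjoint
          (hTU _ Finset.inter_subset_right _ Finset.inter_subset_right),
          hUcard _ Finset.inter_subset_right]
      omega
    · intro q hq
      simp only [Finset.mem_filter, Finset.mem_product, Finset.mem_powerset] at hq
      obtain ⟨⟨hT, hS⟩, hcard⟩ := hq
      simp only [Finset.mem_filter, Finset.mem_univ, true_and]
      constructor
      · rw [Finset.card_union_of_disjoint (hTU _ hT _ hS), hUcard _ hS, hcard]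
      · rw [Finset.image_union, hTimg _ hT, hUimg _ hS]
    · intro B hB
      simp only [Finset.mem_filter, Finset.mem_univ, true_and] at hB
      exact (hdecomp B hB.2).symm
    · intro q hq
      simp only [Finset.mem_filter, Finset.mem_product, Finset.mem_powerset] at hq
      obtain ⟨⟨hT, hS⟩, hcard⟩ := hq
      have hTA : q.1 ∩ A = q.1 := Finset.inter_eq_left.mpr hT
      have hUA : U q.2 ∩ A = ∅ := by
        rw [← Finset.disjoint_iff_inter_eq_empty]
        exact (hTU A (le_refl A) _ hS).symm
      have hTC : q.1 ∩ C = ∅ := by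
        rw [← Finset.disjoint_iff_inter_eq_empty]
        have := hdAC 0 hd
        rw [hC0] at this
        exact this.mono hT (le_refl C)
      have : (q.1 ∪ U q.2) ∩ A = q.1 ∧ (q.1 ∪ U q.2) ∩ C = q.2 := by
        constructor
        · rw [Finset.union_inter_distrib_right, hTA, hUA, Finset.union_empty]
        · rw [Finset.union_inter_distrib_right, hTC, hUC _ hS, Finset.empty_union]
      exact Prod.ext this.1 this.2
  rw [key]
  have hmaps : ∀ q ∈ (A.powerset ×ˢ C.powerset).filter
      (fun q : Finset α × Finset α => q.1.card + d * q.2.card = r),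
      (fun q : Finset α × Finset α => q.1.card) q ∈ Finset.range (r+1) := by
    intro q hq
    simp only [Finset.mem_filter] at hq
    simp only [Finset.mem_range]
    omega
  rw [Finset.card_eq_sum_card_fiberwise hmaps]
  refine Finset.sum_congr rfl ?_
  intro t ht
  have htr : t ≤ r := Nat.lt_succ_iff.mp (Finset.mem_range.mp ht)
  have hfib : ((A.powerset ×ˢ C.powerset).filter
        (fun q : Finset α × Finset α => q.1.card + d * q.2.card = r)).filter
        (fun q => (fun q : Finset α × Finset α => q.1.card) q = t)
      = (A.powersetCard t) ×ˢ (C.powerset.filter (fun S => d * S.card = r - t)) := by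
    ext q
    simp only [Finset.mem_filter, Finset.mem_product, Finset.mem_powerset,
      Finset.mem_powersetCard]
    constructor
    · rintro ⟨⟨⟨h1, h2⟩, h3⟩, h4⟩
      exact ⟨⟨h1, h4⟩, h2, by omega⟩
    · rintro ⟨⟨h1, h4⟩, h2, h3⟩
      exact ⟨⟨⟨h1, h2⟩, by omega⟩, h4⟩
  rw [hfib, Finset.card_product, Finset.card_powersetCard]
  by_cases hdvd : d ∣ (r - t)
  · rw [if_pos hdvd]
    have hps : C.powerset.filter (fun S => d * S.card = r - t)
        = C.powersetCard ((r - t)/d) := by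
      ext S
      simp only [Finset.mem_filter, Finset.mem_powerset, Finset.mem_powersetCard]
      constructor
      · rintro ⟨h1, h2⟩
        exact ⟨h1, (Nat.div_eq_of_eq_mul_right hd h2.symm).symm⟩
      · rintro ⟨h1, h2⟩
        exact ⟨h1, by rw [h2, Nat.mul_div_cancel' hdvd]⟩
    rw [hps, Finset.card_powersetCard]
  · rw [if_neg hdvd]
    have hps : C.powerset.filter (fun S => d * S.card = r - t) = ∅ := by
      ext S
      simp only [Finset.mem_filter, Finset.mem_powerset, Finset.notMem_empty, iff_false,
        not_and]
      intro _ h2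
      exact hdvd ⟨S.card, h2.symm⟩
    rw [hps]
    simp

lemma partition_card (f : α → α) (hf : Function.Injective f)
    (d : ℕ) (hd : 0 < d)
    (A C : Finset α) (Cs : ℕ → Finset α)
    (hC0 : Cs 0 = C)
    (himg : ∀ i, i + 1 < d → Cs (i + 1) = (Cs i).image f)
    (hcover : ∀ x, x ∈ A ∨ ∃ i, i < d ∧ x ∈ Cs i)
    (hdAC : ∀ i, i < d → Disjoint A (Cs i))
    (hdCC : ∀ i j, i < d → j < d → i ≠ j → Disjoint (Cs i) (Cs j)) :
    Fintype.card α = A.card + d * C.card := by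
  classical
  have hCs : ∀ i, i < d → Cs i = C.image f^[i] := by
    intro i
    induction i with
    | zero => intro _; simpa using hC0
    | succ n ih =>
      intro hn
      rw [himg n hn, ih (by omega), Finset.image_image, Function.iterate_succ']
  have huniv : (Finset.univ : Finset α) = A ∪ (Finset.range d).biUnion Cs := by
    ext x
    simp only [Finset.mem_univ, true_iff, Finset.mem_union, Finset.mem_biUnion,
      Finset.mem_range]
    rcases hcover x with h | ⟨i, hi, hx⟩
    · exact Or.inl h
    · exact Or.inr ⟨i, hi, hx⟩
  have h1 : Fintype.card α = A.card + ((Finset.range d).biUnion Cs).card := by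
    rw [← Finset.card_univ, huniv, Finset.card_union_of_disjoint]
    rw [Finset.disjoint_right]
    intro x hx
    rcases Finset.mem_biUnion.mp hx with ⟨i, hi, hxi⟩
    exact Finset.disjoint_right.mp (hdAC i (Finset.mem_range.mp hi)) hxi
  rw [h1, Finset.card_biUnion]
  · congr 1
    rw [Finset.sum_congr rfl (fun i hi => by
      rw [hCs i (Finset.mem_range.mp hi),
        Finset.card_image_of_injective C (hf.iterate i)])]
    simp [mul_comm]
  · intro i hi j hj hij
    exact hdCC i j (Finset.mem_range.mp hi) (Finset.mem_range.mp hj) hij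

end Master


section Grp
variable {n : ℕ}

def rotP (n : ℕ) : Equiv.Perm (Fin n × Fin n) where
  toFun p := (p.2.rev, p.1)
  invFun p := (p.2, p.1.rev)
  left_inv p := by simp
  right_inv p := by simp

def diaP (n : ℕ) : Equiv.Perm (Fin n × Fin n) where
  toFun p := (p.2, p.1)
  invFun p := (p.2, p.1)
  left_inv p := by simp
  right_inv p := by simp

lemma rotP_apply (p : Fin n × Fin n) : rotP n p = (p.2.rev, p.1) := rfl
lemma diaP_apply (p : Fin n × Fin n) : diaP n p = (p.2, p.1) := rfl

lemma rotP_sq (p : Fin n × Fin n) : (rotP n ^ 2) p = (p.1.rev, p.2.rev) := by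
  simp [pow_succ, Equiv.Perm.mul_apply, rotP_apply]
lemma rotP_cube (p : Fin n × Fin n) : (rotP n ^ 3) p = (p.2, p.1.rev) := by
  simp [pow_succ, Equiv.Perm.mul_apply, rotP_apply]
lemma rotP_four : (rotP n) ^ 4 = 1 := by
  refine Equiv.ext fun p => ?_
  simp [pow_succ, Equiv.Perm.mul_apply, rotP_apply]
lemma diaP_sq : (diaP n) ^ 2 = 1 := by
  refine Equiv.ext fun p => ?_
  simp [pow_succ, Equiv.Perm.mul_apply, diaP_apply]
lemma dia_rot : diaP n * rotP n = rotP n ^ 3 * diaP n := by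
  refine Equiv.ext fun p => ?_
  simp [Equiv.Perm.mul_apply, rotP_cube, rotP_apply, diaP_apply]

lemma rotP_eq_of_mod {a b : ℕ} (h : a % 4 = b % 4) : (rotP n) ^ a = rotP n ^ b := by
  rw [pow_eq_pow_mod a rotP_four, pow_eq_pow_mod b rotP_four, h]

lemma dia_rot_pow (m : ℕ) : diaP n * rotP n ^ m = rotP n ^ (3 * m) * diaP n := by
  induction m with
  | zero => simp
  | succ mm ih =>
    rw [pow_succ, ← mul_assoc, ih, mul_assoc, dia_rot, ← mul_assoc, ← pow_add,
      show 3 * mm + 3 = 3 * (mm + 1) by ring]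

lemma rot_pow_dia (m : ℕ) : rotP n ^ m * diaP n = diaP n * rotP n ^ (3 * m) := by
  rw [dia_rot_pow (3 * m), show 3 * (3 * m) = 9 * m by ring]
  congr 1
  apply rotP_eq_of_mod
  omega

def phiF (n : ℕ) : DihedralGroup 4 → Equiv.Perm (Fin n × Fin n)
  | DihedralGroup.r i => rotP n ^ i.val
  | DihedralGroup.sr i => diaP n * rotP n ^ i.val

lemma zmod4_neg : ∀ i : ZMod 4, -i = 3 * i := by decide

def phi (n : ℕ) : DihedralGroup 4 →* Equiv.Perm (Fin n × Fin n) where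
  toFun := phiF n
  map_one' := by
    rw [DihedralGroup.one_def]
    show rotP n ^ (0 : ZMod 4).val = 1
    simp [ZMod.val_zero]
  map_mul' := by
    intro x y
    rcases x with i | i <;> rcases y with j | j
    · rw [DihedralGroup.r_mul_r]
      show rotP n ^ (i + j).val = rotP n ^ i.val * rotP n ^ j.val
      rw [← pow_add]
      apply rotP_eq_of_mod
      rw [ZMod.val_add]
      omega
    · rw [DihedralGroup.r_mul_sr]
      show diaP n * rotP n ^ (j - i).val = rotP n ^ i.val * (diaP n * rotP n ^ j.val)
      rw [← mul_assoc, rot_pow_dia, mul_assoc, ← pow_add]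
      congr 1
      apply rotP_eq_of_mod
      rw [sub_eq_add_neg, zmod4_neg _, ZMod.val_add, ZMod.val_mul]
      have h3 : (3 : ZMod 4).val = 3 := rfl
      rw [h3]
      omega
    · rw [DihedralGroup.sr_mul_r]
      show diaP n * rotP n ^ (i + j).val = diaP n * rotP n ^ i.val * rotP n ^ j.val
      rw [mul_assoc, ← pow_add]
      congr 1
      apply rotP_eq_of_mod
      rw [ZMod.val_add]
      omega
    · rw [DihedralGroup.sr_mul_sr]
      show rotP n ^ (j - i).val = diaP n * rotP n ^ i.val * (diaP n * rotP n ^ j.val)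
      rw [mul_assoc, ← mul_assoc (rotP n ^ i.val), rot_pow_dia,
        mul_assoc (diaP n) (rotP n ^ (3 * i.val)), ← mul_assoc, ← sq, diaP_sq, one_mul,
        ← pow_add]
      apply rotP_eq_of_mod
      rw [sub_eq_add_neg, zmod4_neg _, ZMod.val_add, ZMod.val_mul]
      have h3 : (3 : ZMod 4).val = 3 := rfl
      rw [h3]
      omega
end Grp


section Action
variable (n r : ℕ)

lemma phi_r0 : ⇑(phi n (DihedralGroup.r 0)) = fun p : Fin n × Fin n => p := by
  show ⇑(rotP n ^ (0 : ZMod 4).val) = _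
  rw [show (0 : ZMod 4).val = 0 from rfl, pow_zero]
  rfl

lemma phi_r1 : ⇑(phi n (DihedralGroup.r 1)) = fun p : Fin n × Fin n => (p.2.rev, p.1) := by
  show ⇑(rotP n ^ (1 : ZMod 4).val) = _
  rw [show (1 : ZMod 4).val = 1 from rfl, pow_one]
  rfl

lemma phi_r2 : ⇑(phi n (DihedralGroup.r 2)) = fun p : Fin n × Fin n => (p.1.rev, p.2.rev) := by
  show ⇑(rotP n ^ (2 : ZMod 4).val) = _
  rw [show (2 : ZMod 4).val = 2 from rfl]
  funext p
  exact rotP_sq p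

lemma phi_r3 : ⇑(phi n (DihedralGroup.r 3)) = fun p : Fin n × Fin n => (p.2, p.1.rev) := by
  show ⇑(rotP n ^ (3 : ZMod 4).val) = _
  rw [show (3 : ZMod 4).val = 3 from rfl]
  funext p
  exact rotP_cube p

lemma phi_sr0 : ⇑(phi n (DihedralGroup.sr 0)) = fun p : Fin n × Fin n => (p.2, p.1) := by
  show ⇑(diaP n * rotP n ^ (0 : ZMod 4).val) = _
  rw [show (0 : ZMod 4).val = 0 from rfl, pow_zero, mul_one]
  rfl

lemma phi_sr1 : ⇑(phi n (DihedralGroup.sr 1)) = fun p : Fin n × Fin n => (p.1, p.2.rev) := by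
  show ⇑(diaP n * rotP n ^ (1 : ZMod 4).val) = _
  rw [show (1 : ZMod 4).val = 1 from rfl, pow_one]
  funext p
  rw [Equiv.Perm.mul_apply, rotP_apply, diaP_apply]

lemma phi_sr2 : ⇑(phi n (DihedralGroup.sr 2)) = fun p : Fin n × Fin n => (p.2.rev, p.1.rev) := by
  show ⇑(diaP n * rotP n ^ (2 : ZMod 4).val) = _
  rw [show (2 : ZMod 4).val = 2 from rfl]
  funext p
  rw [Equiv.Perm.mul_apply, rotP_sq, diaP_apply]

lemma phi_sr3 : ⇑(phi n (DihedralGroup.sr 3)) = fun p : Fin n × Fin n => (p.1.rev, p.2) := by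
  show ⇑(diaP n * rotP n ^ (3 : ZMod 4).val) = _
  rw [show (3 : ZMod 4).val = 3 from rfl]
  funext p
  rw [Equiv.Perm.mul_apply, rotP_cube, diaP_apply]

lemma zmod4_cases : ∀ i : ZMod 4, i = 0 ∨ i = 1 ∨ i = 2 ∨ i = 3 := by decide

lemma hD4range (gf : (Fin n × Fin n) → (Fin n × Fin n)) :
    gf ∈ D4 n ↔ ∃ g : DihedralGroup 4, ⇑(phi n g) = gf := by
  constructor
  · intro h
    simp only [D4, Set.mem_insert_iff, Set.mem_singleton_iff] at h
    rcases h with h|h|h|h|h|h|h|h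
    · exact ⟨DihedralGroup.r 0, by rw [phi_r0, h]⟩
    · exact ⟨DihedralGroup.r 1, by rw [phi_r1, h]⟩
    · exact ⟨DihedralGroup.r 2, by rw [phi_r2, h]⟩
    · exact ⟨DihedralGroup.r 3, by rw [phi_r3, h]⟩
    · exact ⟨DihedralGroup.sr 3, by rw [phi_sr3, h]⟩
    · exact ⟨DihedralGroup.sr 1, by rw [phi_sr1, h]⟩
    · exact ⟨DihedralGroup.sr 0, by rw [phi_sr0, h]⟩
    · exact ⟨DihedralGroup.sr 2, by rw [phi_sr2, h]⟩
  · rintro ⟨g, rfl⟩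
    simp only [D4, Set.mem_insert_iff, Set.mem_singleton_iff]
    rcases g with i | i <;> rcases zmod4_cases i with h|h|h|h <;> subst h
    · exact Or.inl (phi_r0 n)
    · exact Or.inr (Or.inl (phi_r1 n))
    · exact Or.inr (Or.inr (Or.inl (phi_r2 n)))
    · exact Or.inr (Or.inr (Or.inr (Or.inl (phi_r3 n))))
    · exact Or.inr (Or.inr (Or.inr (Or.inr (Or.inr (Or.inr (Or.inl (phi_sr0 n)))))))
    · exact Or.inr (Or.inr (Or.inr (Or.inr (Or.inr (Or.inl (phi_sr1 n))))))
    · exact Or.inr (Or.inr (Or.inr (Or.inr (Or.inr (Or.inr (Or.inr (phi_sr2 n)))))))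
    · exact Or.inr (Or.inr (Or.inr (Or.inr (Or.inl (phi_sr3 n)))))

end Action

section Brd
variable (n r : ℕ)

abbrev Board (n r : ℕ) := {B : Finset (Fin n × Fin n) // B.card = r}

instance : SMul (DihedralGroup 4) (Board n r) where
  smul g B := ⟨B.1.image (phi n g), by
    rw [Finset.card_image_of_injective _ (phi n g).injective, B.2]⟩

lemma board_smul_def (g : DihedralGroup 4) (B : Board n r) :
    (g • B).1 = B.1.image (phi n g) := rfl

instance : MulAction (DihedralGroup 4) (Board n r) where
  one_smul B := by
    apply Subtype.ext
    rw [board_smul_def, map_one]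
    simp
  mul_smul g h B := by
    apply Subtype.ext
    rw [board_smul_def, board_smul_def, board_smul_def, map_mul, Finset.image_image]
    rfl

lemma orbitOf_image_eq (B : Finset (Fin n × Fin n)) (g : DihedralGroup 4) :
    orbitOf (D4 n) (B.image (phi n g)) = orbitOf (D4 n) B := by
  ext O
  simp only [orbitOf, Set.mem_setOf_eq]
  constructor
  · rintro ⟨h, hh, rfl⟩
    obtain ⟨a, rfl⟩ := (hD4range n h).mp hh
    refine ⟨⇑(phi n (a * g)), (hD4range n _).mpr ⟨a * g, rfl⟩, ?_⟩
    rw [map_mul, Equiv.Perm.coe_mul, ← Finset.image_image]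
  · rintro ⟨h, hh, rfl⟩
    obtain ⟨a, rfl⟩ := (hD4range n h).mp hh
    refine ⟨⇑(phi n (a * g⁻¹)), (hD4range n _).mpr ⟨a * g⁻¹, rfl⟩, ?_⟩
    rw [map_mul, Equiv.Perm.coe_mul, Finset.image_image, Function.comp_assoc]
    have : ⇑(phi n g⁻¹) ∘ ⇑(phi n g) = id := by
      rw [← Equiv.Perm.coe_mul, ← map_mul, inv_mul_cancel, map_one]
      rfl
    rw [this, Function.comp_id]

lemma ncard_orbits :
    Set.ncard {O : Set (Finset (Fin n × Fin n)) |
        ∃ B : Finset (Fin n × Fin n), B.card = r ∧ O = orbitOf (D4 n) B}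
      = Nat.card (Quotient (MulAction.orbitRel (DihedralGroup 4) (Board n r))) := by
  classical
  have hwell : ∀ b₁ b₂ : Board n r,
      (MulAction.orbitRel (DihedralGroup 4) (Board n r)).r b₁ b₂ →
      orbitOf (D4 n) b₁.1 = orbitOf (D4 n) b₂.1 := by
    intro b₁ b₂ hrel
    obtain ⟨g, hg⟩ := MulAction.mem_orbit_iff.mp hrel
    have : b₁.1 = b₂.1.image (phi n g) := by rw [← hg]; rfl
    rw [this, orbitOf_image_eq]
  set q : Quotient (MulAction.orbitRel (DihedralGroup 4) (Board n r)) →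
      Set (Finset (Fin n × Fin n)) := Quotient.lift (fun b => orbitOf (D4 n) b.1) hwell with hq
  have hqmk : ∀ b : Board n r, q (Quotient.mk _ b) = orbitOf (D4 n) b.1 := fun b => rfl
  have hid : ∀ B : Finset (Fin n × Fin n), B ∈ orbitOf (D4 n) B := by
    intro B
    exact ⟨fun p => p, by simp [D4], Finset.image_id⟩
  have hqinj : Function.Injective q := by
    intro x y
    induction x using Quotient.ind with | _ b₁ =>
    induction y using Quotient.ind with | _ b₂ =>
    intro hxy
    rw [hqmk, hqmk] at hxy
    have h1 : b₁.1 ∈ orbitOf (D4 n) b₂.1 := by rw [← hxy]; exact hid b₁.1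
    obtain ⟨h, hh, himg⟩ := h1
    obtain ⟨a, rfl⟩ := (hD4range n h).mp hh
    apply Quotient.sound
    exact MulAction.mem_orbit_iff.mpr ⟨a, Subtype.ext himg⟩
  have hrange : {O : Set (Finset (Fin n × Fin n)) |
      ∃ B : Finset (Fin n × Fin n), B.card = r ∧ O = orbitOf (D4 n) B} = Set.range q := by
    ext O
    constructor
    · rintro ⟨B, hB, rfl⟩
      exact ⟨Quotient.mk _ ⟨B, hB⟩, rfl⟩
    · rintro ⟨x, rfl⟩
      induction x using Quotient.ind with | _ b =>
      exact ⟨b.1, b.2, (hqmk b).symm⟩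
  rw [hrange, ← Set.image_univ, Set.ncard_image_of_injective _ hqinj, Set.ncard_univ]

end Brd

section Burn
variable (n r : ℕ)

noncomputable def cnt (n r : ℕ) (f : (Fin n × Fin n) → (Fin n × Fin n)) : ℕ :=
  Nat.card {B : Finset (Fin n × Fin n) // B.card = r ∧ B.image f = B}

lemma fixedBy_card (g : DihedralGroup 4) :
    Nat.card (MulAction.fixedBy (Board n r) g) = cnt n r ⇑(phi n g) := by
  apply Nat.card_congr
  exact {
    toFun := fun x => ⟨x.1.1, x.1.2, by
      have h2 := congrArg Subtype.val (MulAction.mem_fixedBy.mp x.2)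
      rw [board_smul_def] at h2
      exact h2⟩
    invFun := fun B => ⟨⟨B.1, B.2.1⟩, by
      refine MulAction.mem_fixedBy.mpr ?_
      apply Subtype.ext
      rw [board_smul_def]
      exact B.2.2⟩
    left_inv := fun x => rfl
    right_inv := fun B => rfl }

lemma burnside :
    8 * Nat.card (Quotient (MulAction.orbitRel (DihedralGroup 4) (Board n r))) =
      ∑ g : DihedralGroup 4, cnt n r ⇑(phi n g) := by
  classical
  haveI : Fintype (Quotient (MulAction.orbitRel (DihedralGroup 4) (Board n r))) :=
    Fintype.ofFinite _
  haveI : ∀ a : DihedralGroup 4, Fintype (MulAction.fixedBy (Board n r) a) :=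
    fun a => Fintype.ofFinite _
  have H := MulAction.sum_card_fixedBy_eq_card_orbits_mul_card_group
    (DihedralGroup 4) (Board n r)
  have h8 : Fintype.card (DihedralGroup 4) = 8 := by rw [DihedralGroup.card]
  rw [h8] at H
  have hL : ∀ a : DihedralGroup 4,
      Fintype.card (MulAction.fixedBy (Board n r) a) = cnt n r ⇑(phi n a) := by
    intro a
    rw [← Nat.card_eq_fintype_card, fixedBy_card]
  rw [Finset.sum_congr rfl (fun a _ => hL a)] at H
  rw [Nat.card_eq_fintype_card, H]
  ring

lemma sum_dihedral (F : DihedralGroup 4 → ℕ) :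
    ∑ g : DihedralGroup 4, F g =
      F (.r 0) + F (.r 1) + F (.r 2) + F (.r 3) +
      (F (.sr 0) + F (.sr 1) + F (.sr 2) + F (.sr 3)) := by
  have huniv : (Finset.univ : Finset (DihedralGroup 4)) =
      {.r 0, .r 1, .r 2, .r 3, .sr 0, .sr 1, .sr 2, .sr 3} := by decide
  rw [huniv]
  rw [Finset.sum_insert (by decide), Finset.sum_insert (by decide),
    Finset.sum_insert (by decide), Finset.sum_insert (by decide),
    Finset.sum_insert (by decide), Finset.sum_insert (by decide),
    Finset.sum_insert (by decide), Finset.sum_singleton]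
  ring

lemma image_perm_inv_iff (e : Equiv.Perm (Fin n × Fin n)) (B : Finset (Fin n × Fin n)) :
    B.image ⇑e⁻¹ = B ↔ B.image ⇑e = B := by
  constructor <;> intro h
  · conv_lhs => rw [← h]
    rw [Finset.image_image]
    have : ⇑e ∘ ⇑e⁻¹ = id := by
      funext x; simp
    rw [this, Finset.image_id]
  · conv_lhs => rw [← h]
    rw [Finset.image_image]
    have : ⇑e⁻¹ ∘ ⇑e = id := by
      funext x; simp
    rw [this, Finset.image_id]

lemma cnt_inv (e : Equiv.Perm (Fin n × Fin n)) : cnt n r ⇑e⁻¹ = cnt n r ⇑e := by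
  unfold cnt
  apply Nat.card_congr
  apply Equiv.subtypeEquivRight
  intro B
  rw [and_congr_right_iff]
  intro _
  rw [image_perm_inv_iff]

end Burn

section Apply
open Finset

variable (k r : ℕ)

lemma fin_center (k : ℕ) : (⟨k, by omega⟩ : Fin (2*k+1)).rev = ⟨k, by omega⟩ := by
  ext
  rw [Fin.val_rev]
  show 2*k+1 - (k+1) = k
  omega

lemma cnt_rot90 :
    cnt (2*k+1) r (fun p => (p.2.rev, p.1)) =
      ∑ t ∈ Finset.range (r + 1),
        if 4 ∣ (r - t) then Nat.choose 1 t * Nat.choose (k*(k+1)) ((r - t)/4) else 0 := by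
  classical
  set n := 2*k+1 with hn
  set κ : Fin n := ⟨k, by omega⟩ with hκ
  set f : (Fin n × Fin n) → (Fin n × Fin n) := fun p => (p.2.rev, p.1) with hf
  have hfinj : Function.Injective f := by
    intro p q h
    rw [hf] at h
    simp only [Prod.mk.injEq] at h
    exact Prod.ext (h.2) (Fin.rev_injective h.1)
  set A : Finset (Fin n × Fin n) := {(κ, κ)} with hA
  set C0 : Finset (Fin n × Fin n) := univ.filter (fun p => p.1.val < k ∧ p.2.val ≤ k) with hC0
  set C1 : Finset (Fin n × Fin n) := univ.filter (fun p => k ≤ p.1.val ∧ p.2.val < k) with hC1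
  set C2 : Finset (Fin n × Fin n) := univ.filter (fun p => k < p.1.val ∧ k ≤ p.2.val) with hC2
  set C3 : Finset (Fin n × Fin n) := univ.filter (fun p => p.1.val ≤ k ∧ k < p.2.val) with hC3
  set Cs : ℕ → Finset (Fin n × Fin n) :=
    fun i => if i = 0 then C0 else if i = 1 then C1 else if i = 2 then C2 else C3 with hCs
  have hrev : ∀ a : Fin n, a.rev.val = 2*k - a.val := by
    intro a
    rw [Fin.val_rev]
    omega
  have hbd : ∀ a : Fin n, a.val < 2*k+1 := fun a => a.isLt
  have himg1 : C1 = C0.image f := by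
    ext p
    obtain ⟨a, b⟩ := p
    simp only [hC0, hC1, Finset.mem_image, Finset.mem_filter, Finset.mem_univ, true_and, hf]
    constructor
    · rintro ⟨h1, h2⟩
      refine ⟨(b, a.rev), ⟨?_, ?_⟩, ?_⟩
      · dsimp only; omega
      · dsimp only; rw [hrev]; omega
      · dsimp only; rw [Prod.mk.injEq]
        exact ⟨Fin.rev_rev a, rfl⟩
    · rintro ⟨⟨i, j⟩, ⟨h1, h2⟩, heq⟩
      dsimp only at h1 h2 heq
      rw [Prod.mk.injEq] at heq
      obtain ⟨ha, hb⟩ := heq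
      subst hb
      have hvj := hrev j
      have : a.val = 2*k - j.val := by rw [← ha, hvj]
      omega
  have himg2 : C2 = C1.image f := by
    ext p
    obtain ⟨a, b⟩ := p
    simp only [hC1, hC2, Finset.mem_image, Finset.mem_filter, Finset.mem_univ, true_and, hf]
    constructor
    · rintro ⟨h1, h2⟩
      refine ⟨(b, a.rev), ⟨?_, ?_⟩, ?_⟩
      · dsimp only; omega
      · dsimp only; rw [hrev]; have := hbd a; omega
      · dsimp only; rw [Prod.mk.injEq]
        exact ⟨Fin.rev_rev a, rfl⟩
    · rintro ⟨⟨i, j⟩, ⟨h1, h2⟩, heq⟩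
      dsimp only at h1 h2 heq
      rw [Prod.mk.injEq] at heq
      obtain ⟨ha, hb⟩ := heq
      subst hb
      have hj := hrev j
      have hjb := hbd j
      have : a.val = 2*k - j.val := by rw [← ha, hj]
      omega
  have himg3 : C3 = C2.image f := by
    ext p
    obtain ⟨a, b⟩ := p
    simp only [hC2, hC3, Finset.mem_image, Finset.mem_filter, Finset.mem_univ, true_and, hf]
    constructor
    · rintro ⟨h1, h2⟩
      refine ⟨(b, a.rev), ⟨?_, ?_⟩, ?_⟩
      · dsimp only; omega
      · dsimp only; rw [hrev]; omega
      · dsimp only; rw [Prod.mk.injEq]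
        exact ⟨Fin.rev_rev a, rfl⟩
    · rintro ⟨⟨i, j⟩, ⟨h1, h2⟩, heq⟩
      dsimp only at h1 h2 heq
      rw [Prod.mk.injEq] at heq
      obtain ⟨ha, hb⟩ := heq
      subst hb
      have hj := hrev j
      have hjb := hbd j
      have : a.val = 2*k - j.val := by rw [← ha, hj]
      omega
  have hCs0 : Cs 0 = C0 := rfl
  have himg : ∀ i, i + 1 < 4 → Cs (i+1) = (Cs i).image f := by
    intro i hi
    have h3 : i < 3 := by omega
    interval_cases i
    · exact himg1
    · exact himg2
    · exact himg3
  have hAfix : ∀ a ∈ A, f a = a := by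
    intro a ha
    rw [hA, Finset.mem_singleton] at ha
    subst ha
    show (κ.rev, κ) = (κ, κ)
    rw [hκ, fin_center]
  have hC4 : ∀ c ∈ C0, f^[4] c = c := by
    intro c _
    obtain ⟨a, b⟩ := c
    show f (f (f (f (a, b)))) = (a, b)
    rw [hf]
    simp [Fin.rev_rev]
  have hmemA : ∀ a b : Fin n, ((a,b) ∈ A ↔ (a.val = k ∧ b.val = k)) := by
    intro a b
    rw [hA, Finset.mem_singleton, Prod.mk.injEq]
    constructor
    · rintro ⟨h1, h2⟩
      rw [hκ] at h1 h2
      exact ⟨by rw [h1], by rw [h2]⟩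
    · rintro ⟨h1, h2⟩
      exact ⟨Fin.ext h1, Fin.ext h2⟩
  have hm0 : ∀ a b : Fin n, (a,b) ∈ C0 ↔ (a.val < k ∧ b.val ≤ k) := by
    intro a b
    rw [hC0, Finset.mem_filter]
    simp
  have hm1 : ∀ a b : Fin n, (a,b) ∈ C1 ↔ (k ≤ a.val ∧ b.val < k) := by
    intro a b
    rw [hC1, Finset.mem_filter]
    simp
  have hm2 : ∀ a b : Fin n, (a,b) ∈ C2 ↔ (k < a.val ∧ k ≤ b.val) := by
    intro a b
    rw [hC2, Finset.mem_filter]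
    simp
  have hm3 : ∀ a b : Fin n, (a,b) ∈ C3 ↔ (a.val ≤ k ∧ k < b.val) := by
    intro a b
    rw [hC3, Finset.mem_filter]
    simp
  have hcover : ∀ x : Fin n × Fin n, x ∈ A ∨ ∃ i, i < 4 ∧ x ∈ Cs i := by
    intro x
    obtain ⟨a, b⟩ := x
    have ha := hbd a
    have hb := hbd b
    rcases Nat.lt_trichotomy a.val k with h1 | h1 | h1
    · rcases le_or_gt b.val k with h2 | h2
      · exact Or.inr ⟨0, by omega, (hm0 a b).mpr (by omega)⟩
      · exact Or.inr ⟨3, by omega, (hm3 a b).mpr (by omega)⟩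
    · rcases Nat.lt_trichotomy b.val k with h2 | h2 | h2
      · exact Or.inr ⟨1, by omega, (hm1 a b).mpr (by omega)⟩
      · exact Or.inl ((hmemA a b).mpr ⟨h1, h2⟩)
      · exact Or.inr ⟨3, by omega, (hm3 a b).mpr (by omega)⟩
    · rcases Nat.lt_or_ge b.val k with h2 | h2
      · exact Or.inr ⟨1, by omega, (hm1 a b).mpr (by omega)⟩
      · exact Or.inr ⟨2, by omega, (hm2 a b).mpr (by omega)⟩
  have hdA : ∀ (X : Finset (Fin n × Fin n)),
      (∀ a b : Fin n, (a,b) ∈ X → ¬(a.val = k ∧ b.val = k)) → Disjoint A X := by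
    intro X hX
    rw [Finset.disjoint_left]
    rintro ⟨a, b⟩ hx hy
    exact hX a b hy ((hmemA a b).mp hx)
  have hdAC : ∀ i, i < 4 → Disjoint A (Cs i) := by
    intro i hi
    interval_cases i
    · exact hdA C0 (fun a b hab => by rw [hm0] at hab; omega)
    · exact hdA C1 (fun a b hab => by rw [hm1] at hab; omega)
    · exact hdA C2 (fun a b hab => by rw [hm2] at hab; omega)
    · exact hdA C3 (fun a b hab => by rw [hm3] at hab; omega)
  have hd01 : Disjoint C0 C1 := by
    rw [Finset.disjoint_left]
    rintro ⟨a,b⟩ hx hy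
    rw [hm0] at hx; rw [hm1] at hy; omega
  have hd02 : Disjoint C0 C2 := by
    rw [Finset.disjoint_left]
    rintro ⟨a,b⟩ hx hy
    rw [hm0] at hx; rw [hm2] at hy; omega
  have hd03 : Disjoint C0 C3 := by
    rw [Finset.disjoint_left]
    rintro ⟨a,b⟩ hx hy
    rw [hm0] at hx; rw [hm3] at hy; omega
  have hd12 : Disjoint C1 C2 := by
    rw [Finset.disjoint_left]
    rintro ⟨a,b⟩ hx hy
    rw [hm1] at hx; rw [hm2] at hy; omega
  have hd13 : Disjoint C1 C3 := by
    rw [Finset.disjoint_left]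
    rintro ⟨a,b⟩ hx hy
    rw [hm1] at hx; rw [hm3] at hy; omega
  have hd23 : Disjoint C2 C3 := by
    rw [Finset.disjoint_left]
    rintro ⟨a,b⟩ hx hy
    rw [hm2] at hx; rw [hm3] at hy; omega
  have hdCC : ∀ i j, i < 4 → j < 4 → i ≠ j → Disjoint (Cs i) (Cs j) := by
    intro i j hi hj hij
    interval_cases i <;> interval_cases j
    · exact absurd rfl hij
    · exact hd01
    · exact hd02
    · exact hd03
    · exact hd01.symm
    · exact absurd rfl hij
    · exact hd12
    · exact hd13
    · exact hd02.symm
    · exact hd12.symm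
    · exact absurd rfl hij
    · exact hd23
    · exact hd03.symm
    · exact hd13.symm
    · exact hd23.symm
    · exact absurd rfl hij
  have hcount := invariant_count f hfinj 4 r (by omega) A C0 Cs hCs0 himg hAfix hC4
    hcover hdAC hdCC
  have hpc := partition_card f hfinj 4 (by omega) A C0 Cs hCs0 himg hcover hdAC hdCC
  have hcardA : A.card = 1 := by rw [hA]; simp
  have hcardα : Fintype.card (Fin n × Fin n) = n * n := by
    rw [Fintype.card_prod, Fintype.card_fin]
  have hcardC : C0.card = k * (k+1) := by
    rw [hcardα, hcardA] at hpc
    have hpc2 : 4 * (k*(k+1)) + 1 = 1 + 4 * C0.card := by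
      calc 4*(k*(k+1)) + 1 = (2*k+1)*(2*k+1) := by ring
      _ = 1 + 4*C0.card := hpc
    linarith
  show Nat.card {B : Finset (Fin n × Fin n) // B.card = r ∧ B.image f = B} = _
  rw [hcount, hcardA, hcardC]
end Apply

section Invol
open Finset

lemma cnt_invol (n r : ℕ) (f : Fin n × Fin n → Fin n × Fin n)
    (hfinj : Function.Injective f)
    (A C0 C1 : Finset (Fin n × Fin n))
    (himg1 : C1 = C0.image f)
    (hAfix : ∀ a ∈ A, f a = a)
    (hC2 : ∀ c ∈ C0, f (f c) = c)
    (hcover : ∀ x, x ∈ A ∨ x ∈ C0 ∨ x ∈ C1)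
    (hd0 : Disjoint A C0) (hd1 : Disjoint A C1) (hd01 : Disjoint C0 C1) :
    cnt n r f = (∑ t ∈ Finset.range (r+1),
        if 2 ∣ (r-t) then (A.card).choose t * (C0.card).choose ((r-t)/2) else 0)
      ∧ Fintype.card (Fin n × Fin n) = A.card + 2 * C0.card := by
  classical
  set Cs : ℕ → Finset (Fin n × Fin n) := fun i => if i = 0 then C0 else C1 with hCs
  have hCs0 : Cs 0 = C0 := rfl
  have himg : ∀ i, i + 1 < 2 → Cs (i+1) = (Cs i).image f := by
    intro i hi
    have : i = 0 := by omega
    subst this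
    exact himg1
  have hC2' : ∀ c ∈ C0, f^[2] c = c := by
    intro c hc
    show f (f c) = c
    exact hC2 c hc
  have hcover' : ∀ x : Fin n × Fin n, x ∈ A ∨ ∃ i, i < 2 ∧ x ∈ Cs i := by
    intro x
    rcases hcover x with h | h | h
    · exact Or.inl h
    · exact Or.inr ⟨0, by omega, h⟩
    · exact Or.inr ⟨1, by omega, h⟩
  have hdAC : ∀ i, i < 2 → Disjoint A (Cs i) := by
    intro i hi
    interval_cases i
    · exact hd0
    · exact hd1
  have hdCC : ∀ i j, i < 2 → j < 2 → i ≠ j → Disjoint (Cs i) (Cs j) := by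
    intro i j hi hj hij
    interval_cases i <;> interval_cases j
    · exact absurd rfl hij
    · exact hd01
    · exact hd01.symm
    · exact absurd rfl hij
  have hcount := invariant_count f hfinj 2 r (by omega) A C0 Cs hCs0 himg hAfix hC2'
    hcover' hdAC hdCC
  have hpc := partition_card f hfinj 2 (by omega) A C0 Cs hCs0 himg hcover' hdAC hdCC
  exact ⟨hcount, hpc⟩

end Invol

section Invols2
open Finset

lemma cnt_rot180 (k r : ℕ) :
    cnt (2*k+1) r (fun p => (p.1.rev, p.2.rev)) =
      ∑ t ∈ Finset.range (r+1),
        if 2 ∣ (r-t) then Nat.choose 1 t * Nat.choose (2*(k*(k+1))) ((r-t)/2) else 0 := by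
  classical
  set n := 2*k+1 with hn
  set κ : Fin n := ⟨k, by omega⟩ with hκ
  set f : (Fin n × Fin n) → (Fin n × Fin n) := fun p => (p.1.rev, p.2.rev) with hf
  have hrev : ∀ a : Fin n, a.rev.val = 2*k - a.val := by
    intro a; rw [Fin.val_rev]; omega
  have hbd : ∀ a : Fin n, a.val < 2*k+1 := fun a => a.isLt
  have hfinj : Function.Injective f := by
    intro p q h
    rw [hf] at h
    simp only [Prod.mk.injEq] at h
    exact Prod.ext (Fin.rev_injective h.1) (Fin.rev_injective h.2)
  set A : Finset (Fin n × Fin n) := {(κ, κ)} with hA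
  set C0 : Finset (Fin n × Fin n) :=
    univ.filter (fun p => p.1.val < k ∨ (p.1.val = k ∧ p.2.val < k)) with hC0
  set C1 : Finset (Fin n × Fin n) :=
    univ.filter (fun p => k < p.1.val ∨ (p.1.val = k ∧ k < p.2.val)) with hC1
  have hm0 : ∀ a b : Fin n, (a,b) ∈ C0 ↔ (a.val < k ∨ (a.val = k ∧ b.val < k)) := by
    intro a b; rw [hC0, Finset.mem_filter]; simp
  have hm1 : ∀ a b : Fin n, (a,b) ∈ C1 ↔ (k < a.val ∨ (a.val = k ∧ k < b.val)) := by
    intro a b; rw [hC1, Finset.mem_filter]; simp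
  have hmemA : ∀ a b : Fin n, ((a,b) ∈ A ↔ (a.val = k ∧ b.val = k)) := by
    intro a b
    rw [hA, Finset.mem_singleton, Prod.mk.injEq]
    constructor
    · rintro ⟨h1, h2⟩
      rw [hκ] at h1 h2
      exact ⟨by rw [h1], by rw [h2]⟩
    · rintro ⟨h1, h2⟩
      exact ⟨Fin.ext h1, Fin.ext h2⟩
  have himg1 : C1 = C0.image f := by
    ext p
    obtain ⟨a, b⟩ := p
    rw [hm1, Finset.mem_image]
    constructor
    · intro h1
      refine ⟨(a.rev, b.rev), ?_, ?_⟩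
      · rw [hm0, hrev, hrev]
        have := hbd a; have := hbd b
        omega
      · show (a.rev.rev, b.rev.rev) = (a, b)
        rw [Fin.rev_rev, Fin.rev_rev]
    · rintro ⟨⟨i, j⟩, hij, heq⟩
      rw [hm0] at hij
      have heq' : (i.rev, j.rev) = (a, b) := heq
      rw [Prod.mk.injEq] at heq'
      obtain ⟨ha, hb⟩ := heq'
      have hi := hrev i; have hj := hrev j
      have h1 : a.val = 2*k - i.val := by rw [← ha, hi]
      have h2 : b.val = 2*k - j.val := by rw [← hb, hj]
      have := hbd i; have := hbd j
      omega
  have hAfix : ∀ a ∈ A, f a = a := by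
    intro a ha
    rw [hA, Finset.mem_singleton] at ha
    subst ha
    show (κ.rev, κ.rev) = (κ, κ)
    rw [hκ, fin_center]
  have hC2 : ∀ c ∈ C0, f (f c) = c := by
    intro c _
    obtain ⟨a, b⟩ := c
    show (a.rev.rev, b.rev.rev) = (a, b)
    rw [Fin.rev_rev, Fin.rev_rev]
  have hcover : ∀ x : Fin n × Fin n, x ∈ A ∨ x ∈ C0 ∨ x ∈ C1 := by
    intro x
    obtain ⟨a, b⟩ := x
    rw [hmemA, hm0, hm1]
    omega
  have hd0 : Disjoint A C0 := by
    rw [Finset.disjoint_left]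
    rintro ⟨a, b⟩ hx hy
    rw [hmemA] at hx; rw [hm0] at hy; omega
  have hd1 : Disjoint A C1 := by
    rw [Finset.disjoint_left]
    rintro ⟨a, b⟩ hx hy
    rw [hmemA] at hx; rw [hm1] at hy; omega
  have hd01 : Disjoint C0 C1 := by
    rw [Finset.disjoint_left]
    rintro ⟨a, b⟩ hx hy
    rw [hm0] at hx; rw [hm1] at hy; omega
  obtain ⟨hcount, hpc⟩ := cnt_invol n r f hfinj A C0 C1 himg1 hAfix hC2 hcover hd0 hd1 hd01
  have hcardA : A.card = 1 := by rw [hA]; simp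
  have hcardα : Fintype.card (Fin n × Fin n) = n * n := by
    rw [Fintype.card_prod, Fintype.card_fin]
  have hcardC : C0.card = 2*(k*(k+1)) := by
    rw [hcardα, hcardA] at hpc
    have hpc2 : 2 * (2*(k*(k+1))) + 1 = 1 + 2 * C0.card := by
      calc 2*(2*(k*(k+1))) + 1 = (2*k+1)*(2*k+1) := by ring
      _ = 1 + 2*C0.card := hpc
    linarith
  rw [show cnt (2*k+1) r (fun p => (p.1.rev, p.2.rev)) = cnt n r f from rfl,
    hcount, hcardA, hcardC]
end Invols2

section Refl
open Finset

lemma cnt_refl_v (k r : ℕ) :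
    cnt (2*k+1) r (fun p => (p.1, p.2.rev)) =
      ∑ t ∈ Finset.range (r+1),
        if 2 ∣ (r-t) then Nat.choose (2*k+1) t * Nat.choose (k*(2*k+1)) ((r-t)/2) else 0 := by
  classical
  set n := 2*k+1 with hn
  set κ : Fin n := ⟨k, by omega⟩ with hκ
  set f : (Fin n × Fin n) → (Fin n × Fin n) := fun p => (p.1, p.2.rev) with hf
  have hrev : ∀ a : Fin n, a.rev.val = 2*k - a.val := by
    intro a; rw [Fin.val_rev]; omega
  have hbd : ∀ a : Fin n, a.val < 2*k+1 := fun a => a.isLt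
  have hfinj : Function.Injective f := by
    intro p q h
    rw [hf] at h
    simp only [Prod.mk.injEq] at h
    exact Prod.ext h.1 (Fin.rev_injective h.2)
  set A : Finset (Fin n × Fin n) := univ.image (fun i => (i, κ)) with hA
  set C0 : Finset (Fin n × Fin n) := univ.filter (fun p => p.2.val < k) with hC0
  set C1 : Finset (Fin n × Fin n) := univ.filter (fun p => k < p.2.val) with hC1
  have hm0 : ∀ a b : Fin n, (a,b) ∈ C0 ↔ b.val < k := by
    intro a b; rw [hC0, Finset.mem_filter]; simp
  have hm1 : ∀ a b : Fin n, (a,b) ∈ C1 ↔ k < b.val := by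
    intro a b; rw [hC1, Finset.mem_filter]; simp
  have hmemA : ∀ a b : Fin n, ((a,b) ∈ A ↔ b.val = k) := by
    intro a b
    rw [hA, Finset.mem_image]
    constructor
    · rintro ⟨i, _, heq⟩
      rw [Prod.mk.injEq] at heq
      rw [← heq.2, hκ]
    · intro h
      exact ⟨a, Finset.mem_univ a, by rw [Prod.mk.injEq]; exact ⟨rfl, Fin.ext (by rw [h, hκ])⟩⟩
  have himg1 : C1 = C0.image f := by
    ext p
    obtain ⟨a, b⟩ := p
    rw [hm1, Finset.mem_image]
    constructor
    · intro h1
      refine ⟨(a, b.rev), ?_, ?_⟩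
      · rw [hm0, hrev]; have := hbd b; omega
      · show (a, b.rev.rev) = (a, b)
        rw [Fin.rev_rev]
    · rintro ⟨⟨i, j⟩, hij, heq⟩
      rw [hm0] at hij
      have heq' : (i, j.rev) = (a, b) := heq
      rw [Prod.mk.injEq] at heq'
      have hj := hrev j
      have h2 : b.val = 2*k - j.val := by rw [← heq'.2, hj]
      have := hbd j
      omega
  have hAfix : ∀ a ∈ A, f a = a := by
    intro a ha
    rw [hA, Finset.mem_image] at ha
    obtain ⟨i, _, rfl⟩ := ha
    show (i, κ.rev) = (i, κ)
    rw [hκ, fin_center]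
  have hC2 : ∀ c ∈ C0, f (f c) = c := by
    intro c _
    obtain ⟨a, b⟩ := c
    show (a, b.rev.rev) = (a, b)
    rw [Fin.rev_rev]
  have hcover : ∀ x : Fin n × Fin n, x ∈ A ∨ x ∈ C0 ∨ x ∈ C1 := by
    intro x
    obtain ⟨a, b⟩ := x
    rw [hmemA, hm0, hm1]
    omega
  have hd0 : Disjoint A C0 := by
    rw [Finset.disjoint_left]
    rintro ⟨a, b⟩ hx hy
    rw [hmemA] at hx; rw [hm0] at hy; omega
  have hd1 : Disjoint A C1 := by
    rw [Finset.disjoint_left]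
    rintro ⟨a, b⟩ hx hy
    rw [hmemA] at hx; rw [hm1] at hy; omega
  have hd01 : Disjoint C0 C1 := by
    rw [Finset.disjoint_left]
    rintro ⟨a, b⟩ hx hy
    rw [hm0] at hx; rw [hm1] at hy; omega
  obtain ⟨hcount, hpc⟩ := cnt_invol n r f hfinj A C0 C1 himg1 hAfix hC2 hcover hd0 hd1 hd01
  have hcardA : A.card = 2*k+1 := by
    rw [hA, Finset.card_image_of_injective _ (fun i j h => (Prod.mk.injEq _ _ _ _).mp h |>.1),
      Finset.card_univ, Fintype.card_fin]
  have hcardα : Fintype.card (Fin n × Fin n) = n * n := by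
    rw [Fintype.card_prod, Fintype.card_fin]
  have hcardC : C0.card = k*(2*k+1) := by
    rw [hcardα, hcardA] at hpc
    have hpc2 : 2 * (k*(2*k+1)) + (2*k+1) = (2*k+1) + 2 * C0.card := by
      calc 2*(k*(2*k+1)) + (2*k+1) = (2*k+1)*(2*k+1) := by ring
      _ = (2*k+1) + 2*C0.card := hpc
    linarith
  rw [show cnt (2*k+1) r (fun p => (p.1, p.2.rev)) = cnt n r f from rfl,
    hcount, hcardA, hcardC]

lemma cnt_refl_h (k r : ℕ) :
    cnt (2*k+1) r (fun p => (p.1.rev, p.2)) =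
      ∑ t ∈ Finset.range (r+1),
        if 2 ∣ (r-t) then Nat.choose (2*k+1) t * Nat.choose (k*(2*k+1)) ((r-t)/2) else 0 := by
  classical
  set n := 2*k+1 with hn
  set κ : Fin n := ⟨k, by omega⟩ with hκ
  set f : (Fin n × Fin n) → (Fin n × Fin n) := fun p => (p.1.rev, p.2) with hf
  have hrev : ∀ a : Fin n, a.rev.val = 2*k - a.val := by
    intro a; rw [Fin.val_rev]; omega
  have hbd : ∀ a : Fin n, a.val < 2*k+1 := fun a => a.isLt
  have hfinj : Function.Injective f := by
    intro p q h
    rw [hf] at h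
    simp only [Prod.mk.injEq] at h
    exact Prod.ext (Fin.rev_injective h.1) h.2
  set A : Finset (Fin n × Fin n) := univ.image (fun i => (κ, i)) with hA
  set C0 : Finset (Fin n × Fin n) := univ.filter (fun p => p.1.val < k) with hC0
  set C1 : Finset (Fin n × Fin n) := univ.filter (fun p => k < p.1.val) with hC1
  have hm0 : ∀ a b : Fin n, (a,b) ∈ C0 ↔ a.val < k := by
    intro a b; rw [hC0, Finset.mem_filter]; simp
  have hm1 : ∀ a b : Fin n, (a,b) ∈ C1 ↔ k < a.val := by
    intro a b; rw [hC1, Finset.mem_filter]; simp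
  have hmemA : ∀ a b : Fin n, ((a,b) ∈ A ↔ a.val = k) := by
    intro a b
    rw [hA, Finset.mem_image]
    constructor
    · rintro ⟨i, _, heq⟩
      rw [Prod.mk.injEq] at heq
      rw [← heq.1, hκ]
    · intro h
      exact ⟨b, Finset.mem_univ b, by rw [Prod.mk.injEq]; exact ⟨Fin.ext (by rw [h, hκ]), rfl⟩⟩
  have himg1 : C1 = C0.image f := by
    ext p
    obtain ⟨a, b⟩ := p
    rw [hm1, Finset.mem_image]
    constructor
    · intro h1
      refine ⟨(a.rev, b), ?_, ?_⟩
      · rw [hm0, hrev]; have := hbd a; omega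
      · show (a.rev.rev, b) = (a, b)
        rw [Fin.rev_rev]
    · rintro ⟨⟨i, j⟩, hij, heq⟩
      rw [hm0] at hij
      have heq' : (i.rev, j) = (a, b) := heq
      rw [Prod.mk.injEq] at heq'
      have hi := hrev i
      have h2 : a.val = 2*k - i.val := by rw [← heq'.1, hi]
      have := hbd i
      omega
  have hAfix : ∀ a ∈ A, f a = a := by
    intro a ha
    rw [hA, Finset.mem_image] at ha
    obtain ⟨i, _, rfl⟩ := ha
    show (κ.rev, i) = (κ, i)
    rw [hκ, fin_center]
  have hC2 : ∀ c ∈ C0, f (f c) = c := by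
    intro c _
    obtain ⟨a, b⟩ := c
    show (a.rev.rev, b) = (a, b)
    rw [Fin.rev_rev]
  have hcover : ∀ x : Fin n × Fin n, x ∈ A ∨ x ∈ C0 ∨ x ∈ C1 := by
    intro x
    obtain ⟨a, b⟩ := x
    rw [hmemA, hm0, hm1]
    omega
  have hd0 : Disjoint A C0 := by
    rw [Finset.disjoint_left]
    rintro ⟨a, b⟩ hx hy
    rw [hmemA] at hx; rw [hm0] at hy; omega
  have hd1 : Disjoint A C1 := by
    rw [Finset.disjoint_left]
    rintro ⟨a, b⟩ hx hy
    rw [hmemA] at hx; rw [hm1] at hy; omega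
  have hd01 : Disjoint C0 C1 := by
    rw [Finset.disjoint_left]
    rintro ⟨a, b⟩ hx hy
    rw [hm0] at hx; rw [hm1] at hy; omega
  obtain ⟨hcount, hpc⟩ := cnt_invol n r f hfinj A C0 C1 himg1 hAfix hC2 hcover hd0 hd1 hd01
  have hcardA : A.card = 2*k+1 := by
    rw [hA, Finset.card_image_of_injective _ (fun i j h => (Prod.mk.injEq _ _ _ _).mp h |>.2),
      Finset.card_univ, Fintype.card_fin]
  have hcardα : Fintype.card (Fin n × Fin n) = n * n := by
    rw [Fintype.card_prod, Fintype.card_fin]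
  have hcardC : C0.card = k*(2*k+1) := by
    rw [hcardα, hcardA] at hpc
    have hpc2 : 2 * (k*(2*k+1)) + (2*k+1) = (2*k+1) + 2 * C0.card := by
      calc 2*(k*(2*k+1)) + (2*k+1) = (2*k+1)*(2*k+1) := by ring
      _ = (2*k+1) + 2*C0.card := hpc
    linarith
  rw [show cnt (2*k+1) r (fun p => (p.1.rev, p.2)) = cnt n r f from rfl,
    hcount, hcardA, hcardC]

lemma cnt_refl_d (k r : ℕ) :
    cnt (2*k+1) r (fun p => (p.2, p.1)) =
      ∑ t ∈ Finset.range (r+1),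
        if 2 ∣ (r-t) then Nat.choose (2*k+1) t * Nat.choose (k*(2*k+1)) ((r-t)/2) else 0 := by
  classical
  set n := 2*k+1 with hn
  set f : (Fin n × Fin n) → (Fin n × Fin n) := fun p => (p.2, p.1) with hf
  have hbd : ∀ a : Fin n, a.val < 2*k+1 := fun a => a.isLt
  have hfinj : Function.Injective f := by
    intro p q h
    rw [hf] at h
    simp only [Prod.mk.injEq] at h
    exact Prod.ext h.2 h.1
  set A : Finset (Fin n × Fin n) := univ.image (fun i => (i, i)) with hA
  set C0 : Finset (Fin n × Fin n) := univ.filter (fun p => p.1.val < p.2.val) with hC0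
  set C1 : Finset (Fin n × Fin n) := univ.filter (fun p => p.2.val < p.1.val) with hC1
  have hm0 : ∀ a b : Fin n, (a,b) ∈ C0 ↔ a.val < b.val := by
    intro a b; rw [hC0, Finset.mem_filter]; simp
  have hm1 : ∀ a b : Fin n, (a,b) ∈ C1 ↔ b.val < a.val := by
    intro a b; rw [hC1, Finset.mem_filter]; simp
  have hmemA : ∀ a b : Fin n, ((a,b) ∈ A ↔ a.val = b.val) := by
    intro a b
    rw [hA, Finset.mem_image]
    constructor
    · rintro ⟨i, _, heq⟩
      rw [Prod.mk.injEq] at heq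
      rw [← heq.1, ← heq.2]
    · intro h
      exact ⟨a, Finset.mem_univ a, by rw [Prod.mk.injEq]; exact ⟨rfl, Fin.ext h⟩⟩
  have himg1 : C1 = C0.image f := by
    ext p
    obtain ⟨a, b⟩ := p
    rw [hm1, Finset.mem_image]
    constructor
    · intro h1
      refine ⟨(b, a), ?_, rfl⟩
      rw [hm0]; omega
    · rintro ⟨⟨i, j⟩, hij, heq⟩
      rw [hm0] at hij
      have heq' : (j, i) = (a, b) := heq
      rw [Prod.mk.injEq] at heq'
      obtain ⟨h1, h2⟩ := heq'
      subst h1; subst h2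
      omega
  have hAfix : ∀ a ∈ A, f a = a := by
    intro a ha
    rw [hA, Finset.mem_image] at ha
    obtain ⟨i, _, rfl⟩ := ha
    rfl
  have hC2 : ∀ c ∈ C0, f (f c) = c := by
    intro c _
    rfl
  have hcover : ∀ x : Fin n × Fin n, x ∈ A ∨ x ∈ C0 ∨ x ∈ C1 := by
    intro x
    obtain ⟨a, b⟩ := x
    rw [hmemA, hm0, hm1]
    omega
  have hd0 : Disjoint A C0 := by
    rw [Finset.disjoint_left]
    rintro ⟨a, b⟩ hx hy
    rw [hmemA] at hx; rw [hm0] at hy; omega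
  have hd1 : Disjoint A C1 := by
    rw [Finset.disjoint_left]
    rintro ⟨a, b⟩ hx hy
    rw [hmemA] at hx; rw [hm1] at hy; omega
  have hd01 : Disjoint C0 C1 := by
    rw [Finset.disjoint_left]
    rintro ⟨a, b⟩ hx hy
    rw [hm0] at hx; rw [hm1] at hy; omega
  obtain ⟨hcount, hpc⟩ := cnt_invol n r f hfinj A C0 C1 himg1 hAfix hC2 hcover hd0 hd1 hd01
  have hcardA : A.card = 2*k+1 := by
    rw [hA, Finset.card_image_of_injective _ (fun i j h => (Prod.mk.injEq _ _ _ _).mp h |>.1),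
      Finset.card_univ, Fintype.card_fin]
  have hcardα : Fintype.card (Fin n × Fin n) = n * n := by
    rw [Fintype.card_prod, Fintype.card_fin]
  have hcardC : C0.card = k*(2*k+1) := by
    rw [hcardα, hcardA] at hpc
    have hpc2 : 2 * (k*(2*k+1)) + (2*k+1) = (2*k+1) + 2 * C0.card := by
      calc 2*(k*(2*k+1)) + (2*k+1) = (2*k+1)*(2*k+1) := by ring
      _ = (2*k+1) + 2*C0.card := hpc
    linarith
  rw [show cnt (2*k+1) r (fun p => (p.2, p.1)) = cnt n r f from rfl,
    hcount, hcardA, hcardC]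

lemma cnt_refl_ad (k r : ℕ) :
    cnt (2*k+1) r (fun p => (p.2.rev, p.1.rev)) =
      ∑ t ∈ Finset.range (r+1),
        if 2 ∣ (r-t) then Nat.choose (2*k+1) t * Nat.choose (k*(2*k+1)) ((r-t)/2) else 0 := by
  classical
  set n := 2*k+1 with hn
  set f : (Fin n × Fin n) → (Fin n × Fin n) := fun p => (p.2.rev, p.1.rev) with hf
  have hrev : ∀ a : Fin n, a.rev.val = 2*k - a.val := by
    intro a; rw [Fin.val_rev]; omega
  have hbd : ∀ a : Fin n, a.val < 2*k+1 := fun a => a.isLt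
  have hfinj : Function.Injective f := by
    intro p q h
    rw [hf] at h
    simp only [Prod.mk.injEq] at h
    exact Prod.ext (Fin.rev_injective h.2) (Fin.rev_injective h.1)
  set A : Finset (Fin n × Fin n) := univ.image (fun i => (i, i.rev)) with hA
  set C0 : Finset (Fin n × Fin n) := univ.filter (fun p => p.1.val + p.2.val < 2*k) with hC0
  set C1 : Finset (Fin n × Fin n) := univ.filter (fun p => 2*k < p.1.val + p.2.val) with hC1
  have hm0 : ∀ a b : Fin n, (a,b) ∈ C0 ↔ a.val + b.val < 2*k := by
    intro a b; rw [hC0, Finset.mem_filter]; simp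
  have hm1 : ∀ a b : Fin n, (a,b) ∈ C1 ↔ 2*k < a.val + b.val := by
    intro a b; rw [hC1, Finset.mem_filter]; simp
  have hmemA : ∀ a b : Fin n, ((a,b) ∈ A ↔ a.val + b.val = 2*k) := by
    intro a b
    rw [hA, Finset.mem_image]
    constructor
    · rintro ⟨i, _, heq⟩
      rw [Prod.mk.injEq] at heq
      obtain ⟨h1, h2⟩ := heq
      have := hrev i
      have := hbd i
      rw [← h1, ← h2]
      omega
    · intro h
      refine ⟨a, Finset.mem_univ a, ?_⟩
      rw [Prod.mk.injEq]
      refine ⟨rfl, Fin.ext ?_⟩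
      rw [hrev]
      have := hbd a; have := hbd b
      omega
  have himg1 : C1 = C0.image f := by
    ext p
    obtain ⟨a, b⟩ := p
    rw [hm1, Finset.mem_image]
    constructor
    · intro h1
      refine ⟨(b.rev, a.rev), ?_, ?_⟩
      · rw [hm0, hrev, hrev]
        have := hbd a; have := hbd b
        omega
      · show (a.rev.rev, b.rev.rev) = (a, b)
        rw [Fin.rev_rev, Fin.rev_rev]
    · rintro ⟨⟨i, j⟩, hij, heq⟩
      rw [hm0] at hij
      have heq' : (j.rev, i.rev) = (a, b) := heq
      rw [Prod.mk.injEq] at heq'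
      obtain ⟨h1, h2⟩ := heq'
      have hi := hrev i; have hj := hrev j
      have ha2 : a.val = 2*k - j.val := by rw [← h1, hj]
      have hb2 : b.val = 2*k - i.val := by rw [← h2, hi]
      have := hbd i; have := hbd j
      omega
  have hAfix : ∀ a ∈ A, f a = a := by
    intro a ha
    rw [hA, Finset.mem_image] at ha
    obtain ⟨i, _, rfl⟩ := ha
    show (i.rev.rev, i.rev) = (i, i.rev)
    rw [Fin.rev_rev]
  have hC2 : ∀ c ∈ C0, f (f c) = c := by
    intro c _
    obtain ⟨a, b⟩ := c
    show (a.rev.rev, b.rev.rev) = (a, b)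
    rw [Fin.rev_rev, Fin.rev_rev]
  have hcover : ∀ x : Fin n × Fin n, x ∈ A ∨ x ∈ C0 ∨ x ∈ C1 := by
    intro x
    obtain ⟨a, b⟩ := x
    rw [hmemA, hm0, hm1]
    omega
  have hd0 : Disjoint A C0 := by
    rw [Finset.disjoint_left]
    rintro ⟨a, b⟩ hx hy
    rw [hmemA] at hx; rw [hm0] at hy; omega
  have hd1 : Disjoint A C1 := by
    rw [Finset.disjoint_left]
    rintro ⟨a, b⟩ hx hy
    rw [hmemA] at hx; rw [hm1] at hy; omega
  have hd01 : Disjoint C0 C1 := by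
    rw [Finset.disjoint_left]
    rintro ⟨a, b⟩ hx hy
    rw [hm0] at hx; rw [hm1] at hy; omega
  obtain ⟨hcount, hpc⟩ := cnt_invol n r f hfinj A C0 C1 himg1 hAfix hC2 hcover hd0 hd1 hd01
  have hcardA : A.card = 2*k+1 := by
    rw [hA, Finset.card_image_of_injective _ (fun i j h => (Prod.mk.injEq _ _ _ _).mp h |>.1),
      Finset.card_univ, Fintype.card_fin]
  have hcardα : Fintype.card (Fin n × Fin n) = n * n := by
    rw [Fintype.card_prod, Fintype.card_fin]
  have hcardC : C0.card = k*(2*k+1) := by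
    rw [hcardα, hcardA] at hpc
    have hpc2 : 2 * (k*(2*k+1)) + (2*k+1) = (2*k+1) + 2 * C0.card := by
      calc 2*(k*(2*k+1)) + (2*k+1) = (2*k+1)*(2*k+1) := by ring
      _ = (2*k+1) + 2*C0.card := hpc
    linarith
  rw [show cnt (2*k+1) r (fun p => (p.2.rev, p.1.rev)) = cnt n r f from rfl,
    hcount, hcardA, hcardC]

end Refl

section Fin2
open Finset

lemma cnt_id (k r : ℕ) :
    cnt (2*k+1) r (fun p => p) = Nat.choose ((2*k+1)^2) r := by
  classical
  unfold cnt
  have h1 : ∀ B : Finset (Fin (2*k+1) × Fin (2*k+1)),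
      (B.card = r ∧ B.image (fun p => p) = B) ↔ B.card = r := by
    intro B
    rw [Finset.image_id']
    exact ⟨fun h => h.1, fun h => ⟨h, rfl⟩⟩
  rw [Nat.card_congr (Equiv.subtypeEquivRight h1), Nat.card_eq_fintype_card,
    Fintype.card_subtype]
  have h2 : Finset.univ.filter (fun B : Finset (Fin (2*k+1) × Fin (2*k+1)) => B.card = r)
      = Finset.powersetCard r Finset.univ := by
    ext B
    simp [Finset.mem_powersetCard]
  rw [h2, Finset.card_powersetCard, Finset.card_univ, Fintype.card_prod, Fintype.card_fin,
    show (2*k+1) * (2*k+1) = (2*k+1)^2 by ring]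

lemma cnt_rot270 (k r : ℕ) :
    cnt (2*k+1) r (fun p => (p.2, p.1.rev)) =
      ∑ t ∈ Finset.range (r + 1),
        if 4 ∣ (r - t) then Nat.choose 1 t * Nat.choose (k*(k+1)) ((r - t)/4) else 0 := by
  have h := cnt_inv (2*k+1) r (rotP (2*k+1))
  have h1 : ⇑(rotP (2*k+1))⁻¹ = (fun p : Fin (2*k+1) × Fin (2*k+1) => (p.2, p.1.rev)) := rfl
  have h2 : ⇑(rotP (2*k+1)) = (fun p : Fin (2*k+1) × Fin (2*k+1) => (p.2.rev, p.1)) := rfl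
  rw [h1, h2] at h
  rw [h, cnt_rot90]

lemma sum_choose_one (m r : ℕ) (d : ℕ) (hr : 1 ≤ r) :
    (∑ t ∈ Finset.range (r+1),
        if d ∣ (r-t) then Nat.choose 1 t * Nat.choose m ((r-t)/d) else 0)
      = (if d ∣ r then Nat.choose m (r/d) else 0)
        + (if d ∣ (r-1) then Nat.choose m ((r-1)/d) else 0) := by
  have hsub : ({0, 1} : Finset ℕ) ⊆ Finset.range (r+1) := by
    intro x hx
    simp only [Finset.mem_insert, Finset.mem_singleton] at hx
    rcases hx with rfl | rfl <;> simp [Finset.mem_range] <;> omega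
  rw [← Finset.sum_subset hsub]
  · rw [Finset.sum_insert (by simp), Finset.sum_singleton]
    simp only [Nat.sub_zero, Nat.choose_self, Nat.choose_one_right, Nat.choose_zero_right,
      one_mul]
  · intro x _ hx
    simp only [Finset.mem_insert, Finset.mem_singleton] at hx
    have h2 : 2 ≤ x := by omega
    have : Nat.choose 1 x = 0 := Nat.choose_eq_zero_of_lt (by omega)
    rw [this]
    simp

lemma sum_even_center (M r : ℕ) (hr : 1 ≤ r) :
    (∑ t ∈ Finset.range (r+1),
        if 2 ∣ (r-t) then Nat.choose 1 t * Nat.choose M ((r-t)/2) else 0)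
      = Nat.choose M (r/2) := by
  rw [sum_choose_one M r 2 hr]
  rcases Nat.even_or_odd r with he | ho
  · have h1 : 2 ∣ r := he.two_dvd
    have h2 : ¬ (2 ∣ (r-1)) := by omega
    rw [if_pos h1, if_neg h2, add_zero]
  · have h1 : ¬ (2 ∣ r) := by
      intro h
      exact (Nat.not_even_iff_odd.mpr ho) (even_iff_two_dvd.mpr h)
    have h2 : 2 ∣ (r-1) := by
      obtain ⟨m, hm⟩ := ho
      omega
    rw [if_pos h2, if_neg h1, zero_add]
    congr 1
    omega

end Fin2

/-- Burnside count, odd square boards: with `N` the number of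
orbits of boards with `r` blockers on the `(2k+1) × (2k+1)` grid under `D4`,
`8N = C((2k+1)²,r) + 2·[4∣r]·C(k(k+1),r/4) + 2·[4∣(r−1)]·C(k(k+1),(r−1)/4)
      + C(2k(k+1),⌊r/2⌋) + 4·Σ_{t=0}^{r} [2∣(r−t)]·C(2k+1,t)·C(k(2k+1),(r−t)/2)`. -/
theorem stmt_11 (k r : ℕ) (hk : 1 ≤ k) (hr1 : 1 ≤ r) (hr2 : r ≤ (2*k+1) ^ 2) :
    8 * Set.ncard {O : Set (Finset (Fin (2*k+1) × Fin (2*k+1))) |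
        ∃ B : Finset (Fin (2*k+1) × Fin (2*k+1)),
          B.card = r ∧ O = orbitOf (D4 (2*k+1)) B} =
      Nat.choose ((2*k+1) ^ 2) r
      + 2 * (if 4 ∣ r then Nat.choose (k * (k+1)) (r / 4) else 0)
      + 2 * (if 4 ∣ (r - 1) then Nat.choose (k * (k+1)) ((r - 1) / 4) else 0)
      + Nat.choose (2 * k * (k+1)) (r / 2)
      + 4 * ∑ t ∈ Finset.range (r + 1),
          (if 2 ∣ (r - t) then
            Nat.choose (2*k+1) t * Nat.choose (k * (2*k+1)) ((r - t) / 2)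
          else 0) := by
  classical
  rw [ncard_orbits (2*k+1) r, burnside (2*k+1) r, sum_dihedral]
  rw [phi_r0, phi_r1, phi_r2, phi_r3, phi_sr0, phi_sr1, phi_sr2, phi_sr3]
  rw [cnt_id, cnt_rot90, cnt_rot180, cnt_rot270, cnt_refl_d, cnt_refl_v, cnt_refl_ad,
    cnt_refl_h]
  rw [sum_choose_one (k*(k+1)) r 4 hr1, sum_even_center (2*(k*(k+1))) r hr1,
    show 2*(k*(k+1)) = 2*k*(k+1) by ring]
  ring
end

section
/- Let m, n ≥ 1 with m ≠ n. Then every single-blocker board on the m×n grid (a singleton {(i,j)} ⊆ Fin m × Fin n) is equivalent under {R0, H, V, R180} to exactly one singleton board {(i′,j′)} whose cell satisfies the following reduction condition: if m and n are not both odd, then 2i′ < m and 2j′ < n; if m and n are both odd, then either (2i′ < m−1 and 2j′ ≤ n−1) or (2i′ = m−1 and 2j′ ≥ n−1). That is, the reduced set of boards with one blocker contains exactly one board from each equivalence class. -/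
/-- The symmetry group `{R0, H, V, R180}` of a non-square `m × n` rectangle,
as permutations of `Fin m × Fin n` (`Fin.rev i = m-1-i` resp. `n-1-j`). -/
def RectG (m n : ℕ) : Set ((Fin m × Fin n) → (Fin m × Fin n)) :=
  { fun p => p,                    -- R0
    fun p => (p.1.rev, p.2),       -- H
    fun p => (p.1, p.2.rev),       -- V
    fun p => (p.1.rev, p.2.rev) }  -- R180

/-- The reduction condition on the cell `(i,j)` of a single-blocker board on
the `m × n` grid: if `m` and `n` are not both odd then `2i < m` and `2j < n`;
if `m` and `n` are both odd then either (`2i < m−1` and `2j ≤ n−1`) or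
(`2i = m−1` and `2j ≥ n−1`). -/
def ReducedCell (m n : ℕ) (i : Fin m) (j : Fin n) : Prop :=
  (¬(Odd m ∧ Odd n) → 2 * i.val < m ∧ 2 * j.val < n) ∧
  ((Odd m ∧ Odd n) →
    (2 * i.val < m - 1 ∧ 2 * j.val ≤ n - 1) ∨
    (2 * i.val = m - 1 ∧ 2 * j.val ≥ n - 1))

/-- Among the four cells `(±i, ±j)`, exactly one satisfies the reduction
condition. -/
lemma rect_key (m n : ℕ) (i : Fin m) (j : Fin n) :
    ∃! q : Fin m × Fin n, ReducedCell m n q.1 q.2 ∧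
      (q = (i, j) ∨ q = (i.rev, j) ∨ q = (i, j.rev) ∨ q = (i.rev, j.rev)) := by
  have hi := i.isLt
  have hj := j.isLt
  by_cases hp : Odd m ∧ Odd n
  · have hm1 := Nat.odd_iff.mp hp.1
    have hn1 := Nat.odd_iff.mp hp.2
    by_cases hc : 2 * i.val = m - 1
    · refine ⟨(i, if n - 1 ≤ 2 * j.val then j else j.rev), ⟨?_, ?_⟩, ?_⟩
      · constructor
        · exact fun h => absurd hp h
        · intro _
          split_ifs with h <;>
            simp only [Fin.val_rev] <;> omega
      · split_ifs with h
        · left; rfl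
        · right; right; left; rfl
      · intro q' ⟨hred, hmem⟩
        rcases hmem with rfl | rfl | rfl | rfl <;>
          (have hred' := hred.2 hp
           dsimp only at hred'
           try simp only [Fin.val_rev] at hred'
           rcases hred' with ⟨ha, hb⟩ | ⟨ha, hb⟩) <;>
          split_ifs with h <;>
          simp only [Prod.mk.injEq, Fin.ext_iff, Fin.val_rev, true_and, and_true] <;> omega
    · refine ⟨(if 2 * i.val < m - 1 then i else i.rev,
               if 2 * j.val ≤ n - 1 then j else j.rev), ⟨?_, ?_⟩, ?_⟩
      · constructor
        · exact fun h => absurd hp h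
        · intro _
          left
          constructor <;> split_ifs with h <;>
            simp only [Fin.val_rev] <;> omega
      · split_ifs with h1 h2 h2
        · left; rfl
        · right; right; left; rfl
        · right; left; rfl
        · right; right; right; rfl
      · intro q' ⟨hred, hmem⟩
        rcases hmem with rfl | rfl | rfl | rfl <;>
          (have hred' := hred.2 hp
           dsimp only at hred'
           try simp only [Fin.val_rev] at hred'
           rcases hred' with ⟨ha, hb⟩ | ⟨ha, hb⟩) <;>
          split_ifs with h1 h2 h2 <;>
          simp only [Prod.mk.injEq, Fin.ext_iff, Fin.val_rev, true_and, and_true] <;> omega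
  · refine ⟨(if 2 * i.val < m then i else i.rev,
             if 2 * j.val < n then j else j.rev), ⟨?_, ?_⟩, ?_⟩
    · constructor
      · intro _
        constructor <;> split_ifs with h <;>
          simp only [Fin.val_rev] <;> omega
      · exact fun h => absurd h hp
    · split_ifs with h1 h2 h2
      · left; rfl
      · right; right; left; rfl
      · right; left; rfl
      · right; right; right; rfl
    · intro q' ⟨hred, hmem⟩
      rcases hmem with rfl | rfl | rfl | rfl <;>
        (have hred' := hred.1 hp
         dsimp only at hred'
         try simp only [Fin.val_rev] at hred'
         obtain ⟨ha, hb⟩ := hred') <;>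
        split_ifs with h1 h2 h2 <;>
        simp only [Prod.mk.injEq, Fin.ext_iff, Fin.val_rev, true_and, and_true] <;> omega

/-- every single-blocker board on a non-square `m × n` grid is
equivalent under `{R0, H, V, R180}` to *exactly one* singleton board whose cell
satisfies the reduction condition. -/
theorem stmt_19 (m n : ℕ) (hm : 1 ≤ m) (hn : 1 ≤ n) (hmn : m ≠ n) :
    ∀ B : Finset (Fin m × Fin n), B.card = 1 →
      ∃! B' : Finset (Fin m × Fin n),
        (∃ (i' : Fin m) (j' : Fin n), B' = {(i', j')} ∧ ReducedCell m n i' j') ∧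
        ∃ g ∈ RectG m n, B.image g = B' := by
  intro B hB
  obtain ⟨p, rfl⟩ := Finset.card_eq_one.mp hB
  obtain ⟨i, j⟩ := p
  obtain ⟨q, ⟨hqred, hqmem⟩, hquniq⟩ := rect_key m n i j
  refine ⟨{q}, ⟨⟨q.1, q.2, by simp, hqred⟩, ?_⟩, ?_⟩
  · rcases hqmem with h | h | h | h
    · exact ⟨fun p => p, Or.inl rfl, by simp [h]⟩
    · exact ⟨fun p => (p.1.rev, p.2), Or.inr (Or.inl rfl), by simp [h]⟩
    · exact ⟨fun p => (p.1, p.2.rev), Or.inr (Or.inr (Or.inl rfl)), by simp [h]⟩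
    · exact ⟨fun p => (p.1.rev, p.2.rev), Or.inr (Or.inr (Or.inr rfl)), by simp [h]⟩
  · rintro B' ⟨⟨i', j', rfl, hred⟩, g, hg, himg⟩
    rw [Finset.image_singleton] at himg
    have hqe : (i', j') = g (i, j) :=
      (Finset.singleton_injective himg).symm
    have : (i', j') = q := by
      refine hquniq (i', j') ⟨hred, ?_⟩
      simp only [RectG, Set.mem_insert_iff, Set.mem_singleton_iff] at hg
      rcases hg with rfl | rfl | rfl | rfl
      · exact Or.inl hqe
      · exact Or.inr (Or.inl hqe)
      · exact Or.inr (Or.inr (Or.inl hqe))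
      · exact Or.inr (Or.inr (Or.inr hqe))
    rw [this]
end
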